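/- arXiv:1207.4884 — 10 statements merged into one kernel-verified Lean document; each statement's English description precedes it below -/
import Mathlib

section
/- Let K be a closed convex set in R^n, let π be a nonzero vector such that the face F = argmax_{x∈K} πx is nonempty and compact. Then for every open neighbourhood U of F there exists ε > 0 such that for every nonzero vector π' with ‖π'/‖π'‖ − π/‖π‖‖ < ε, every maximizer of x ↦ π'x over K lies in U. -/
open scoped InnerProductSpace

noncomputable section

abbrev E (n : ℕ) := EuclideanSpace ℝ (Fin n)

/-- The real vector corresponding to an integer vector. -/
def iv {n : ℕ} (c : Fin n → ℤ) : E n := WithLp.toLp 2 (fun i => (c i : ℝ))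

/-- The Chvátal–Gomory closure of a set `K ⊆ ℝⁿ`. -/
def cg {n : ℕ} (K : Set (E n)) : Set (E n) :=
  {x | ∀ (c : Fin n → ℤ) (δ : ℝ), (∀ y ∈ K, ⟪iv c, y⟫_ℝ ≤ δ) → ⟪iv c, x⟫_ℝ ≤ (⌊δ⌋ : ℝ)}

/-- If `x ∈ K` is at distance at least `R` from `x₀ ∈ K` and `⟪u,x₀⟫ ≤ ⟪u,x⟫`, then the
point of the segment `[x₀,x]` on the sphere of radius `R` around `x₀` lies in `K`, has
`u`-value at least that of `x₀`, and norm at most `‖x₀‖ + R`. -/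
lemma sphere_point {n : ℕ} {K : Set (E n)} (hKconv : Convex ℝ K) {x₀ x : E n}
    (hx₀ : x₀ ∈ K) (hx : x ∈ K) {u : E n} (hmax : ⟪u, x₀⟫_ℝ ≤ ⟪u, x⟫_ℝ) {R : ℝ}
    (hR : 0 < R) (hxR : R ≤ dist x x₀) :
    ∃ z ∈ K ∩ Metric.sphere x₀ R, ⟪u, x₀⟫_ℝ ≤ ⟪u, z⟫_ℝ ∧ ‖z‖ ≤ ‖x₀‖ + R := by
  have hd : 0 < ‖x - x₀‖ := by
    rw [← dist_eq_norm]; linarith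
  set l : ℝ := R / ‖x - x₀‖ with hl
  have hl0 : 0 < l := div_pos hR hd
  have hl1 : l ≤ 1 := by
    rw [div_le_one hd, ← dist_eq_norm]; exact hxR
  set z : E n := x₀ + l • (x - x₀) with hzdef
  have hzcomb : z = (1 - l) • x₀ + l • x := by
    simp only [hzdef, smul_sub, sub_smul, one_smul]
    abel
  refine ⟨z, ⟨?_, ?_⟩, ?_, ?_⟩
  · rw [hzcomb]
    exact hKconv hx₀ hx (by linarith) hl0.le (by ring)
  · have : dist z x₀ = ‖l • (x - x₀)‖ := by
      rw [dist_eq_norm]; congr 1; simp [hzdef]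
    rw [Metric.mem_sphere, this, norm_smul, Real.norm_eq_abs, abs_of_pos hl0, hl]
    field_simp
  · have : ⟪u, z⟫_ℝ = (1 - l) * ⟪u, x₀⟫_ℝ + l * ⟪u, x⟫_ℝ := by
      rw [hzcomb, inner_add_right, real_inner_smul_right, real_inner_smul_right]
    rw [this]
    nlinarith
  · have h1 : ‖z‖ ≤ ‖x₀‖ + ‖l • (x - x₀)‖ := norm_add_le _ _
    have h2 : ‖l • (x - x₀)‖ = l * ‖x - x₀‖ := by
      rw [norm_smul, Real.norm_eq_abs, abs_of_pos hl0]
    have h3 : l * ‖x - x₀‖ = R := by rw [hl]; field_simp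
    linarith

/-- **Continuity of faces.** If the `π`-face of a closed convex set `K` is nonempty and
compact, then for every open neighbourhood `U` of the face there is `ε > 0` such that
every maximizer over `K` of any direction `π'` whose unit vector is `ε`-close to that of
`π` lies in `U`. -/
theorem stmt0 {n : ℕ} (K : Set (E n)) (hKcl : IsClosed K) (hKconv : Convex ℝ K)
    (π : E n) (hπ : π ≠ 0) (F : Set (E n))
    (hF : F = {x ∈ K | ∀ y ∈ K, ⟪π, y⟫_ℝ ≤ ⟪π, x⟫_ℝ})
    (hFne : F.Nonempty) (hFcpt : IsCompact F)
    (U : Set (E n)) (hU : IsOpen U) (hFU : F ⊆ U) :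
    ∃ ε > (0 : ℝ), ∀ π' : E n, π' ≠ 0 → ‖‖π'‖⁻¹ • π' - ‖π‖⁻¹ • π‖ < ε →
      ∀ x ∈ K, (∀ y ∈ K, ⟪π', y⟫_ℝ ≤ ⟪π', x⟫_ℝ) → x ∈ U := by
  obtain ⟨x₀, hx₀F⟩ := hFne
  have hx₀K : x₀ ∈ K := by rw [hF] at hx₀F; exact hx₀F.1
  have hx₀max : ∀ y ∈ K, ⟪π, y⟫_ℝ ≤ ⟪π, x₀⟫_ℝ := by rw [hF] at hx₀F; exact hx₀F.2
  have hπn : (0:ℝ) < ‖π‖ := norm_pos_iff.mpr hπ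
  set uhat : E n := ‖π‖⁻¹ • π with huhatdef
  have huhatmax : ∀ y ∈ K, ⟪uhat, y⟫_ℝ ≤ ⟪uhat, x₀⟫_ℝ := fun y hy => by
    rw [huhatdef, real_inner_smul_left, real_inner_smul_left]
    exact mul_le_mul_of_nonneg_left (hx₀max y hy) (inv_nonneg.mpr hπn.le)
  -- strict inequality off the face
  have hstrict : ∀ y ∈ K, y ∉ F → ⟪uhat, y⟫_ℝ < ⟪uhat, x₀⟫_ℝ := by
    intro y hyK hyF
    rcases lt_or_eq_of_le (huhatmax y hyK) with h | h
    · exact h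
    · exfalso
      apply hyF
      rw [hF]
      refine ⟨hyK, fun z hz => ?_⟩
      have h' : ⟪π, y⟫_ℝ = ⟪π, x₀⟫_ℝ := by
        rw [huhatdef, real_inner_smul_left, real_inner_smul_left] at h
        have := mul_left_cancel₀ (a := ‖π‖⁻¹) (by positivity) h
        exact this
      rw [h']
      exact hx₀max z hz
  -- choose a radius R with F inside the open ball around x₀
  obtain ⟨r, hr⟩ := hFcpt.isBounded.subset_closedBall x₀
  set R : ℝ := max r 0 + 1 with hRdef
  have hR : 0 < R := by positivity
  have hFball : F ⊆ Metric.ball x₀ R := fun y hy => by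
    have := hr hy
    rw [Metric.mem_closedBall] at this
    rw [Metric.mem_ball]
    have : dist y x₀ ≤ max r 0 := le_trans this (le_max_left _ _)
    linarith
  set C : ℝ := ‖x₀‖ + R with hCdef
  have hC : 0 < C := by positivity
  -- the bad compact set
  set T : Set (E n) := ((K ∩ Uᶜ) ∩ Metric.closedBall x₀ R) ∪ (K ∩ Metric.sphere x₀ R)
    with hTdef
  have hTcpt : IsCompact T := by
    apply IsCompact.union
    · exact (isCompact_closedBall x₀ R).inter_left (hKcl.inter hU.isClosed_compl)
    · exact (isCompact_sphere x₀ R).inter_left hKcl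
  have hTK : ∀ y ∈ T, y ∈ K := by
    intro y hy
    rcases hy with h | h
    · exact h.1.1
    · exact h.1
  have hTF : ∀ y ∈ T, y ∉ F := by
    intro y hy hyF
    rcases hy with h | h
    · exact h.1.2 (hFU hyF)
    · have := hFball hyF
      rw [Metric.mem_ball] at this
      have h2 := h.2
      rw [Metric.mem_sphere] at h2
      linarith
  -- given a nearby maximizer outside U, produce a point of T with large u-value
  have hz : ∀ (u : E n) (x : E n), x ∈ K → (∀ y ∈ K, ⟪u, y⟫_ℝ ≤ ⟪u, x⟫_ℝ) → x ∉ U →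
      ∃ z ∈ T, ⟪u, x₀⟫_ℝ ≤ ⟪u, z⟫_ℝ ∧ ‖z‖ ≤ C := by
    intro u x hxK hxmax hxU
    rcases le_or_gt (dist x x₀) R with h | h
    · refine ⟨x, Or.inl ⟨⟨hxK, hxU⟩, Metric.mem_closedBall.mpr h⟩, hxmax x₀ hx₀K, ?_⟩
      have : ‖x‖ ≤ ‖x₀‖ + ‖x - x₀‖ := by
        calc ‖x‖ = ‖x₀ + (x - x₀)‖ := by congr 1; abel
        _ ≤ ‖x₀‖ + ‖x - x₀‖ := norm_add_le _ _
      rw [← dist_eq_norm] at this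
      rw [hCdef]; linarith
    · obtain ⟨z, hzmem, hzval, hznorm⟩ :=
        sphere_point hKconv hx₀K hxK (hxmax x₀ hx₀K) hR h.le
      exact ⟨z, Or.inr hzmem, hzval, hznorm⟩
  rcases T.eq_empty_or_nonempty with hTe | hTne
  · -- T empty: any maximizer outside U would give a point of T
    refine ⟨1, one_pos, fun π' hπ' _ x hxK hxmax => ?_⟩
    by_contra hxU
    obtain ⟨z, hzT, -⟩ := hz π' x hxK hxmax hxU
    rw [hTe] at hzT
    exact hzT
  · -- T nonempty: take the gap γ
    have hcont : Continuous fun t : E n => ⟪uhat, t⟫_ℝ := continuous_const.inner continuous_id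
    obtain ⟨w, hwT, hw⟩ := hTcpt.exists_isMaxOn hTne hcont.continuousOn
    set γ : ℝ := ⟪uhat, x₀⟫_ℝ - ⟪uhat, w⟫_ℝ with hγdef
    have hγ : 0 < γ := by
      have := hstrict w (hTK w hwT) (hTF w hwT)
      rw [hγdef]; linarith
    refine ⟨γ / (3 * C), by positivity, fun π' hπ' hclose x hxK hxmax => ?_⟩
    by_contra hxU
    have hπ'n : (0:ℝ) < ‖π'‖ := norm_pos_iff.mpr hπ'
    set u : E n := ‖π'‖⁻¹ • π' with hudef
    have humax : ∀ y ∈ K, ⟪u, y⟫_ℝ ≤ ⟪u, x⟫_ℝ := fun y hy => by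
      rw [hudef, real_inner_smul_left, real_inner_smul_left]
      exact mul_le_mul_of_nonneg_left (hxmax y hy) (inv_nonneg.mpr hπ'n.le)
    obtain ⟨z, hzT, hzval, hznorm⟩ := hz u x hxK humax hxU
    -- distance estimates
    have hdist : ‖uhat - u‖ < γ / (3 * C) := by
      rw [norm_sub_rev]; exact hclose
    have key : ∀ y : E n, ‖y‖ ≤ C → |⟪uhat, y⟫_ℝ - ⟪u, y⟫_ℝ| ≤ γ / (3 * C) * C := by
      intro y hy
      have h1 : ⟪uhat, y⟫_ℝ - ⟪u, y⟫_ℝ = ⟪uhat - u, y⟫_ℝ := by rw [inner_sub_left]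
      rw [h1]
      calc |⟪uhat - u, y⟫_ℝ| ≤ ‖uhat - u‖ * ‖y‖ := abs_real_inner_le_norm _ _
        _ ≤ γ / (3 * C) * C := by
            apply mul_le_mul hdist.le hy (norm_nonneg _) (by positivity)
    have hx₀n : ‖x₀‖ ≤ C := by rw [hCdef]; linarith
    have k1 := key x₀ hx₀n
    have k2 := key z hznorm
    have hwmax : ⟪uhat, z⟫_ℝ ≤ ⟪uhat, w⟫_ℝ := hw hzT
    have hεC : γ / (3 * C) * C = γ / 3 := by field_simp
    rw [hεC] at k1 k2
    rw [abs_le] at k1 k2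
    -- the contradiction chain
    have : ⟪uhat, x₀⟫_ℝ ≤ ⟪uhat, x₀⟫_ℝ - γ / 3 := by
      calc ⟪uhat, x₀⟫_ℝ ≤ ⟪u, x₀⟫_ℝ + γ / 3 := by linarith [k1.1]
        _ ≤ ⟪u, z⟫_ℝ + γ / 3 := by linarith
        _ ≤ ⟪uhat, z⟫_ℝ + 2 * (γ / 3) := by linarith [k2.2]
        _ ≤ ⟪uhat, w⟫_ℝ + 2 * (γ / 3) := by linarith
        _ = ⟪uhat, x₀⟫_ℝ - γ / 3 := by rw [hγdef]; ring
    linarith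
end
end

section
/- Let P be a polyhedron in R^n and π a nonzero vector such that the face F = argmax_{x∈P} πx is nonempty and compact. Then there exists ε > 0 such that for every nonzero π' with ‖π'/‖π'‖ − π/‖π‖‖ < ε, the set of maximizers of x ↦ π'x over P is contained in F. -/
open scoped InnerProductSpace

noncomputable section

/-- **Continuity of faces of polyhedra.** If `P` is a polyhedron (a finite intersection
of closed halfspaces) and the `π`-face `F` of `P` is nonempty and compact, then the
`π'`-face of `P` is contained in `F` for all directions `π'` close enough to `π`. -/
theorem stmt1 {n : ℕ} (P : Set (E n))
    (hP : ∃ (m : ℕ) (a : Fin m → E n) (b : Fin m → ℝ),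
      P = {x | ∀ i, ⟪a i, x⟫_ℝ ≤ b i})
    (π : E n) (hπ : π ≠ 0) (F : Set (E n))
    (hF : F = {x ∈ P | ∀ y ∈ P, ⟪π, y⟫_ℝ ≤ ⟪π, x⟫_ℝ})
    (hFne : F.Nonempty) (hFcpt : IsCompact F) :
    ∃ ε > (0 : ℝ), ∀ π' : E n, π' ≠ 0 → ‖‖π'‖⁻¹ • π' - ‖π‖⁻¹ • π‖ < ε →
      {x ∈ P | ∀ y ∈ P, ⟪π', y⟫_ℝ ≤ ⟪π', x⟫_ℝ} ⊆ F := by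
  classical
  obtain ⟨m, a, b, hPdef⟩ := hP
  by_contra hcon
  push_neg at hcon
  have hc : ∀ k : ℕ, ∃ q x : E n, q ≠ 0 ∧
      ‖‖q‖⁻¹ • q - ‖π‖⁻¹ • π‖ < 1/(k+1) ∧ x ∈ P ∧
      (∀ y ∈ P, ⟪q, y⟫_ℝ ≤ ⟪q, x⟫_ℝ) ∧ x ∉ F := by
    intro k
    obtain ⟨q, hq0, hqd, hns⟩ := hcon (1/(k+1)) (by positivity)
    obtain ⟨x, hx, hxF⟩ := Set.not_subset.mp hns
    exact ⟨q, x, hq0, hqd, hx.1, hx.2, hxF⟩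
  choose q x hq0 hqd hxP hxmax hxF using hc
  -- tight constraint sets
  set T : ℕ → Finset (Fin m) := fun k => Finset.univ.filter (fun i => ⟪a i, x k⟫_ℝ = b i) with hT
  obtain ⟨S, hSinf⟩ := Finite.exists_infinite_fiber T
  have hI : (T ⁻¹' {S}).Infinite := Set.infinite_coe_iff.mp hSinf
  obtain ⟨k₀, hk₀⟩ := hI.nonempty
  -- key: x k₀ maximizes q k over P for every k in the fiber
  have key : ∀ k ∈ T ⁻¹' {S}, ⟪q k, x k⟫_ℝ ≤ ⟪q k, x k₀⟫_ℝ := by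
    intro k hk
    have hTeq : T k = T k₀ := by
      rw [Set.mem_preimage, Set.mem_singleton_iff] at hk hk₀
      rw [hk, hk₀]
    have htight : ∀ i, ⟪a i, x k⟫_ℝ = b i ↔ ⟪a i, x k₀⟫_ℝ = b i := by
      intro i
      constructor
      · intro h
        have hmem : i ∈ T k := Finset.mem_filter.mpr ⟨Finset.mem_univ i, h⟩
        rw [hTeq] at hmem
        exact (Finset.mem_filter.mp hmem).2
      · intro h
        have hmem : i ∈ T k₀ := Finset.mem_filter.mpr ⟨Finset.mem_univ i, h⟩
        rw [← hTeq] at hmem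
        exact (Finset.mem_filter.mp hmem).2
    have hev : ∀ᶠ t : ℝ in nhdsWithin 0 (Set.Ioi 0),
        ∀ i, ⟪a i, x k + t • (x k - x k₀)⟫_ℝ ≤ b i := by
      rw [Filter.eventually_all]
      intro i
      by_cases hi : ⟪a i, x k⟫_ℝ = b i
      · have hi' := (htight i).mp hi
        filter_upwards with t
        have heq : ⟪a i, x k + t • (x k - x k₀)⟫_ℝ = b i := by
          simp only [inner_add_right, real_inner_smul_right, inner_sub_right, hi, hi']
          ring
        exact le_of_eq heq
      · have hxkP := hxP k
        rw [hPdef] at hxkP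
        have hlt : ⟪a i, x k⟫_ℝ < b i := lt_of_le_of_ne (hxkP i) hi
        have hcont : Continuous (fun t : ℝ => ⟪a i, x k + t • (x k - x k₀)⟫_ℝ) :=
          Continuous.inner continuous_const
            (continuous_const.add (continuous_id.smul continuous_const))
        have htend : Filter.Tendsto (fun t : ℝ => ⟪a i, x k + t • (x k - x k₀)⟫_ℝ)
            (nhdsWithin 0 (Set.Ioi 0)) (nhds (⟪a i, x k⟫_ℝ)) := by
          have h0 : Filter.Tendsto (fun t : ℝ => ⟪a i, x k + t • (x k - x k₀)⟫_ℝ)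
              (nhdsWithin 0 (Set.Ioi 0)) (nhds (⟪a i, x k + (0:ℝ) • (x k - x k₀)⟫_ℝ)) :=
            (hcont.tendsto 0).mono_left nhdsWithin_le_nhds
          simpa using h0
        exact (htend.eventually_lt_const hlt).mono (fun t ht => ht.le)
    obtain ⟨t, htP, ht0⟩ := (hev.and self_mem_nhdsWithin).exists
    have htmem : x k + t • (x k - x k₀) ∈ P := by rw [hPdef]; exact htP
    have hle := hxmax k _ htmem
    have hexp : ⟪q k, x k + t • (x k - x k₀)⟫_ℝ
        = ⟪q k, x k⟫_ℝ + t * (⟪q k, x k⟫_ℝ - ⟪q k, x k₀⟫_ℝ) := by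
      simp only [inner_add_right, real_inner_smul_right, inner_sub_right]
    rw [hexp] at hle
    have ht0' : (0:ℝ) < t := ht0
    by_contra hAB
    push_neg at hAB
    nlinarith [mul_pos ht0' (sub_pos.mpr hAB)]
  -- x k₀ is in F, contradiction
  have hx0F : x k₀ ∈ F := by
    rw [hF]
    refine ⟨hxP k₀, fun y hy => ?_⟩
    have hπn : (0:ℝ) < ‖π‖ := norm_pos_iff.mpr hπ
    have hu' : ⟪‖π‖⁻¹ • π, y⟫_ℝ ≤ ⟪‖π‖⁻¹ • π, x k₀⟫_ℝ := by
      apply le_of_forall_pos_le_add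
      intro δ hδ
      obtain ⟨N, hN⟩ := exists_nat_gt ((‖y‖ + ‖x k₀‖) / δ)
      obtain ⟨k, hkI, hkN⟩ := hI.exists_gt N
      set u : E n := ‖π‖⁻¹ • π
      set uk : E n := ‖q k‖⁻¹ • q k with huk
      have hmax' : ⟪uk, y⟫_ℝ ≤ ⟪uk, x k₀⟫_ℝ := by
        rw [huk, real_inner_smul_left, real_inner_smul_left]
        exact mul_le_mul_of_nonneg_left (le_trans (hxmax k y hy) (key k hkI))
          (by positivity)
      have hsmall : ‖uk - u‖ < 1/(k+1) := hqd k
      have h1 : ⟪u - uk, y⟫_ℝ ≤ ‖u - uk‖ * ‖y‖ := real_inner_le_norm _ _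
      have h2 : ⟪uk - u, x k₀⟫_ℝ ≤ ‖uk - u‖ * ‖x k₀‖ := real_inner_le_norm _ _
      have e1 : ⟪u - uk, y⟫_ℝ = ⟪u, y⟫_ℝ - ⟪uk, y⟫_ℝ := inner_sub_left _ _ _
      have e2 : ⟪uk - u, x k₀⟫_ℝ = ⟪uk, x k₀⟫_ℝ - ⟪u, x k₀⟫_ℝ := inner_sub_left _ _ _
      have hnorm : ‖u - uk‖ = ‖uk - u‖ := norm_sub_rev _ _
      have hN0 : (0:ℝ) < N := by
        have : (0:ℝ) ≤ (‖y‖ + ‖x k₀‖) / δ := by positivity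
        linarith
      have hyx : ‖y‖ + ‖x k₀‖ < N * δ := by
        rw [div_lt_iff₀ hδ] at hN
        linarith
      have hkb : (1:ℝ)/((k:ℝ)+1) ≤ 1/(N:ℝ) := by
        apply one_div_le_one_div_of_le hN0
        have : N ≤ k := le_of_lt hkN
        have : (N:ℝ) ≤ (k:ℝ) := by exact_mod_cast this
        linarith
      have hA : ‖uk - u‖*(‖y‖+‖x k₀‖) ≤ (1/((k:ℝ)+1))*(‖y‖+‖x k₀‖) :=
        mul_le_mul_of_nonneg_right hsmall.le (by positivity)
      have hB : (1/((k:ℝ)+1))*(‖y‖+‖x k₀‖) ≤ (1/(N:ℝ))*(‖y‖+‖x k₀‖) :=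
        mul_le_mul_of_nonneg_right hkb (by positivity)
      have hC : (1/(N:ℝ))*(‖y‖+‖x k₀‖) ≤ (1/(N:ℝ))*((N:ℝ)*δ) :=
        mul_le_mul_of_nonneg_left hyx.le (by positivity)
      have hD : (1/(N:ℝ))*((N:ℝ)*δ) = δ := by field_simp
      nlinarith [norm_nonneg y, norm_nonneg (x k₀), norm_nonneg (uk - u)]
    rw [real_inner_smul_left, real_inner_smul_left] at hu'
    have hinv : (0:ℝ) < ‖π‖⁻¹ := by positivity
    exact (mul_le_mul_iff_right₀ hinv).mp hu'
  exact hxF k₀ hx0F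
end
end

section
/- Let n, N₀ ∈ ℕ and let π ∈ R^n be nonzero. Then the set Z^n + π·{m ∈ ℤ : m > N₀} contains a dense subset of some linear subspace V of R^n. In particular, for every ε > 0 there exist an integer N > N₀ and a ∈ ℤ^n with ‖a − Nπ‖ < ε. -/
open scoped InnerProductSpace

noncomputable section

lemma same_cell {η x y : ℝ} (hη : 0 < η) (h : ⌊x / η⌋ = ⌊y / η⌋) : |x - y| < η := by
  have h1 : (⌊x / η⌋ : ℝ) * η ≤ x := (le_div_iff₀ hη).mp (Int.floor_le _)
  have h2 : x < ((⌊x / η⌋ : ℝ) + 1) * η := (div_lt_iff₀ hη).mp (Int.lt_floor_add_one _)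
  have h3 : (⌊y / η⌋ : ℝ) * η ≤ y := (le_div_iff₀ hη).mp (Int.floor_le _)
  have h4 : y < ((⌊y / η⌋ : ℝ) + 1) * η := (div_lt_iff₀ hη).mp (Int.lt_floor_add_one _)
  rw [h] at h1 h2
  rw [abs_sub_lt_iff]
  constructor <;> nlinarith

lemma exists_approx {n : ℕ} (π : E n) (M₀ : ℤ) {ε : ℝ} (hε : 0 < ε) :
    ∃ (N : ℤ) (a : Fin n → ℤ), M₀ < N ∧ ‖iv a - (N : ℝ) • π‖ < ε := by
  set η : ℝ := ε / (n + 1) with hηdef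
  have hη0 : 0 < η := by positivity
  set M : ℕ := (max M₀ 0).toNat + 1 with hMdef
  set K : ℕ := ⌈1/η⌉₊ + 1 with hKdef
  have celllt : ∀ x : ℝ, (⌊Int.fract x / η⌋).toNat < K := by
    intro x
    have h1 : Int.fract x / η < 1/η := by
      gcongr
      exact Int.fract_lt_one x
    have h2 : (⌊Int.fract x / η⌋ : ℝ) < (K : ℝ) := by
      calc (⌊Int.fract x / η⌋ : ℝ) ≤ Int.fract x / η := Int.floor_le _
        _ < 1/η := h1
        _ ≤ (⌈1/η⌉₊ : ℝ) := Nat.le_ceil _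
        _ < (K : ℝ) := by rw [hKdef]; push_cast; linarith
    have h3 : ⌊Int.fract x / η⌋ < (K : ℤ) := by exact_mod_cast h2
    omega
  set F : ℕ → Fin n → ℝ := fun k i => ((((k+1) * M : ℕ)) : ℝ) * π i with hF
  set g : ℕ → (Fin n → Fin K) := fun k i => ⟨(⌊Int.fract (F k i) / η⌋).toNat, celllt _⟩ with hg
  suffices main : ∀ k1 k2 : ℕ, k1 < k2 → g k1 = g k2 →
      ∃ (N : ℤ) (a : Fin n → ℤ), M₀ < N ∧ ‖iv a - (N : ℝ) • π‖ < ε by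
    obtain ⟨k1, k2, hne, heq⟩ := Finite.exists_ne_map_eq_of_infinite g
    rcases lt_or_gt_of_ne hne with h | h
    · exact main k1 k2 h heq
    · exact main k2 k1 h heq.symm
  intro k1 k2 hk heq
  set m1 : ℕ := (k1+1) * M with hm1
  set m2 : ℕ := (k2+1) * M with hm2
  have hmM : m1 + M ≤ m2 := by
    have h1 : (k1 + 2) * M ≤ (k2 + 1) * M := Nat.mul_le_mul_right M (by omega)
    calc m1 + M = (k1 + 2) * M := by rw [hm1]; ring
      _ ≤ m2 := h1
  refine ⟨(m2 : ℤ) - m1, fun i => ⌊F k2 i⌋ - ⌊F k1 i⌋, ?_, ?_⟩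
  · have h2 : ((max M₀ 0).toNat : ℤ) = max M₀ 0 := Int.toNat_of_nonneg (le_max_right _ _)
    have h1 : M₀ ≤ max M₀ 0 := le_max_left _ _
    omega
  · have hcomp : ∀ i, |(((⌊F k2 i⌋ - ⌊F k1 i⌋ : ℤ)) : ℝ) - (((m2 : ℤ) - m1 : ℤ) : ℝ) * π i| < η := by
      intro i
      have hcell : ⌊Int.fract (F k1 i) / η⌋ = ⌊Int.fract (F k2 i) / η⌋ := by
        have h5 := congrFun heq i
        simp only [hg, Fin.mk.injEq] at h5
        have n1 : 0 ≤ ⌊Int.fract (F k1 i) / η⌋ :=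
          Int.floor_nonneg.mpr (div_nonneg (Int.fract_nonneg _) hη0.le)
        have n2 : 0 ≤ ⌊Int.fract (F k2 i) / η⌋ :=
          Int.floor_nonneg.mpr (div_nonneg (Int.fract_nonneg _) hη0.le)
        omega
      have h := same_cell hη0 hcell
      have e1 : (((⌊F k2 i⌋ - ⌊F k1 i⌋ : ℤ)) : ℝ) - (((m2 : ℤ) - m1 : ℤ) : ℝ) * π i
          = Int.fract (F k1 i) - Int.fract (F k2 i) := by
        simp only [Int.fract, hF, ← hm1, ← hm2]
        push_cast
        ring
      rw [e1]
      exact h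
    have hnorm : ‖iv (fun i => ⌊F k2 i⌋ - ⌊F k1 i⌋) - (((m2 : ℤ) - m1 : ℤ) : ℝ) • π‖ ≤
        Real.sqrt (n * η^2) := by
      rw [EuclideanSpace.norm_eq]
      apply Real.sqrt_le_sqrt
      calc ∑ i, ‖(iv (fun i => ⌊F k2 i⌋ - ⌊F k1 i⌋) - (((m2 : ℤ) - m1 : ℤ) : ℝ) • π) i‖^2
          ≤ ∑ _i : Fin n, η^2 := by
            apply Finset.sum_le_sum
            intro i _
            have : ‖(iv (fun i => ⌊F k2 i⌋ - ⌊F k1 i⌋) - (((m2 : ℤ) - m1 : ℤ) : ℝ) • π) i‖ ≤ η := by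
              have happ : (iv (fun i => ⌊F k2 i⌋ - ⌊F k1 i⌋) - (((m2 : ℤ) - m1 : ℤ) : ℝ) • π) i
                  = (((⌊F k2 i⌋ - ⌊F k1 i⌋ : ℤ)) : ℝ) - (((m2 : ℤ) - m1 : ℤ) : ℝ) * π i := by
                simp [iv]
              rw [happ, Real.norm_eq_abs]
              exact (hcomp i).le
            exact pow_le_pow_left₀ (norm_nonneg _) this 2
        _ = n * η^2 := by simp [Finset.sum_const, nsmul_eq_mul]
    have hlt : Real.sqrt (n * η^2) < ε := by
      rw [show ε = (n+1) * η by rw [hηdef]; field_simp]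
      rw [Real.sqrt_lt' (by positivity)]
      nlinarith [hη0]
    calc ‖iv (fun i => ⌊F k2 i⌋ - ⌊F k1 i⌋) - (((m2 : ℤ) - m1 : ℤ) : ℝ) • π‖
        ≤ Real.sqrt (n * η^2) := hnorm
      _ < ε := hlt


/-- Projection away from the unit vector u contracts norms. -/
lemma proj_contract {n : ℕ} {u : E n} (hu : ‖u‖ = 1) (w : E n) :
    ‖w - ⟪u, w⟫_ℝ • u‖ ≤ ‖w‖ := by
  have h : ‖w - ⟪u, w⟫_ℝ • u‖^2 ≤ ‖w‖^2 := by
    rw [norm_sub_sq_real]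
    have h1 : ⟪w, ⟪u, w⟫_ℝ • u⟫_ℝ = ⟪u, w⟫_ℝ^2 := by
      rw [real_inner_smul_right, real_inner_comm]; ring
    have h2 : ‖⟪u, w⟫_ℝ • u‖^2 = ⟪u, w⟫_ℝ^2 := by
      rw [norm_smul, Real.norm_eq_abs, hu, mul_one, sq_abs]
    rw [h1, h2]; nlinarith [sq_nonneg (⟪u, w⟫_ℝ)]
  have := Real.sqrt_le_sqrt h
  rwa [Real.sqrt_sq (norm_nonneg _), Real.sqrt_sq (norm_nonneg _)] at this

/-- Structure theorem: a closed subgroup of Euclidean space contained in a subspace `W`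
contains a linear subspace `V` which is open in the subgroup. -/
lemma struct {n : ℕ} : ∀ (k : ℕ) (W : Submodule ℝ (E n)) (H : AddSubgroup (E n)),
    Module.finrank ℝ W ≤ k → IsClosed (H : Set (E n)) → (H : Set (E n)) ⊆ W →
    ∃ (V : Submodule ℝ (E n)) (δ : ℝ), 0 < δ ∧ (V : Set (E n)) ⊆ H ∧
      ∀ x ∈ H, ∀ v ∈ V, ‖x - v‖ < δ → x ∈ V := by
  intro k
  induction k with
  | zero =>
    intro W H hrk hcl hsub
    refine ⟨⊥, 1, one_pos, ?_, ?_⟩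
    · intro x hx
      simp only [Submodule.bot_coe, Set.mem_singleton_iff] at hx
      simp only [SetLike.mem_coe, hx]
      exact H.zero_mem
    · intro x hx v hv hlt
      have hW : W = ⊥ := Submodule.finrank_eq_zero.mp (Nat.le_zero.mp hrk)
      have : x ∈ W := hsub hx
      rw [hW, Submodule.mem_bot] at this
      simp [this]
  | succ k ih =>
    intro W H hrk hcl hsub
    by_cases hdisc : ∃ δ > 0, ∀ x ∈ H, ‖x‖ < δ → x = 0
    · obtain ⟨δ, hδ, hδp⟩ := hdisc
      refine ⟨⊥, δ, hδ, ?_, ?_⟩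
      · intro x hx
        simp only [Submodule.bot_coe, Set.mem_singleton_iff] at hx
        simp only [SetLike.mem_coe, hx]
        exact H.zero_mem
      · intro x hx v hv hlt
        rw [Submodule.mem_bot] at hv
        rw [hv, sub_zero] at hlt
        rw [Submodule.mem_bot]
        exact hδp x hx hlt
    · push_neg at hdisc
      -- a sequence of nonzero elements of H tending to 0
      have hseq : ∀ j : ℕ, ∃ x, x ∈ H ∧ ‖x‖ < 1/(j+1) ∧ x ≠ 0 := by
        intro j
        obtain ⟨x, hxH, hx⟩ := hdisc (1/(j+1)) (by positivity)
        exact ⟨x, hxH, by tauto, by tauto⟩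
      choose h hH hlt hne using hseq
      have hrpos : ∀ j, (0:ℝ) < ‖h j‖ := fun j => norm_pos_iff.mpr (hne j)
      set uu : ℕ → E n := fun j => ‖h j‖⁻¹ • h j with huu
      have huusph : ∀ j, uu j ∈ Metric.sphere (0 : E n) 1 := by
        intro j
        simp [huu, norm_smul, abs_of_pos (inv_pos.mpr (hrpos j)),
          inv_mul_cancel₀ (hrpos j).ne']
      obtain ⟨u, husph, φ, hφ, hconv⟩ :=
        (isCompact_sphere (0 : E n) 1).tendsto_subseq huusph
      have hunorm : ‖u‖ = 1 := by simpa using husph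
      have hu0 : u ≠ 0 := by intro h0; rw [h0, norm_zero] at hunorm; norm_num at hunorm
      -- norms of the subsequence tend to 0
      have hrtend : Filter.Tendsto (fun j => ‖h (φ j)‖) Filter.atTop (nhds 0) := by
        apply squeeze_zero (fun j => (hrpos _).le) (fun j => (hlt (φ j)).le)
        exact (tendsto_one_div_add_atTop_nhds_zero_nat).comp hφ.tendsto_atTop
      have huu1 : ⟪u, u⟫_ℝ = 1 := by
        rw [real_inner_self_eq_norm_sq, hunorm]; norm_num
      -- the whole line through u lies in H
      have hline : ∀ t : ℝ, t • u ∈ H := by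
        intro t
        set r : ℕ → ℝ := fun j => ‖h (φ j)‖ with hr
        have hrp : ∀ j, 0 < r j := fun j => hrpos (φ j)
        have hmem : ∀ j : ℕ, (⌊t / r j⌋ : ℤ) • h (φ j) ∈ H := fun j => H.zsmul_mem (hH _) _
        have heq2 : ∀ j, ((⌊t / r j⌋ : ℤ) • h (φ j) : E n)
            = (((⌊t / r j⌋ : ℝ)) * r j) • uu (φ j) := by
          intro j
          rw [← Int.cast_smul_eq_zsmul ℝ]
          have : h (φ j) = r j • uu (φ j) := by
            rw [huu, smul_smul, mul_inv_cancel₀ (hrp j).ne', one_smul]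
          rw [this, smul_smul]
        have hstend : Filter.Tendsto (fun j => ((⌊t / r j⌋ : ℝ)) * r j)
            Filter.atTop (nhds t) := by
          apply tendsto_of_tendsto_of_tendsto_of_le_of_le
            (g := fun j => t - r j) (h := fun _ => t)
          · simpa using Filter.Tendsto.const_sub t hrtend
          · exact tendsto_const_nhds
          · intro j
            have h1 : t / r j < (⌊t / r j⌋ : ℝ) + 1 := Int.lt_floor_add_one _
            have h2 : t < ((⌊t / r j⌋ : ℝ) + 1) * r j := (div_lt_iff₀ (hrp j)).mp h1
            nlinarith [hrp j]
          · intro j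
            have h1 : (⌊t / r j⌋ : ℝ) ≤ t / r j := Int.floor_le _
            calc (⌊t / r j⌋ : ℝ) * r j ≤ (t / r j) * r j :=
                mul_le_mul_of_nonneg_right h1 (hrp j).le
              _ = t := div_mul_cancel₀ t (hrp j).ne'
        have htend : Filter.Tendsto (fun j => ((⌊t / r j⌋ : ℤ) • h (φ j) : E n))
            Filter.atTop (nhds (t • u)) := by
          simp only [heq2]
          exact hstend.smul hconv
        exact hcl.mem_of_tendsto htend (Filter.Eventually.of_forall
          (fun j => hmem j))
      -- u lies in W
      have huW : u ∈ W := by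
        have : ∀ j, uu (φ j) ∈ W := by
          intro j
          exact W.smul_mem _ (hsub (hH (φ j)))
        exact (Submodule.closed_of_finiteDimensional W).mem_of_tendsto hconv
          (Filter.Eventually.of_forall this)
      -- the smaller subgroup and subspace
      set H' : AddSubgroup (E n) :=
        { carrier := {x | x ∈ H ∧ ⟪u, x⟫_ℝ = 0}
          add_mem' := by
            rintro a b ⟨ha, ha0⟩ ⟨hb, hb0⟩
            exact ⟨H.add_mem ha hb, by rw [inner_add_right, ha0, hb0]; ring⟩
          zero_mem' := ⟨H.zero_mem, inner_zero_right u⟩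
          neg_mem' := by
            rintro a ⟨ha, ha0⟩
            exact ⟨H.neg_mem ha, by rw [inner_neg_right, ha0]; ring⟩ } with hH'
      have hH'mem : ∀ x : E n, x ∈ H' ↔ x ∈ H ∧ ⟪u, x⟫_ℝ = 0 := fun x => Iff.rfl
      set W' : Submodule ℝ (E n) := W ⊓ (Submodule.span ℝ {u})ᗮ with hW'
      have hW'lt : W' < W := by
        refine lt_of_le_of_ne inf_le_left ?_
        intro hcontra
        have : u ∈ W' := hcontra ▸ huW
        have : ⟪u, u⟫_ℝ = 0 :=
          Submodule.mem_orthogonal_singleton_iff_inner_right.mp this.2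
        rw [huu1] at this; norm_num at this
      have hrk' : Module.finrank ℝ W' ≤ k := by
        have := Submodule.finrank_lt_finrank_of_lt hW'lt
        omega
      have hcl' : IsClosed (H' : Set (E n)) := by
        have : (H' : Set (E n)) = (H : Set (E n)) ∩ {x | ⟪u, x⟫_ℝ = 0} := rfl
        rw [this]
        exact hcl.inter (isClosed_eq (Continuous.inner continuous_const continuous_id)
          continuous_const)
      have hsub' : (H' : Set (E n)) ⊆ W' := by
        rintro x ⟨hxH, hx0⟩
        exact Submodule.mem_inf.mpr ⟨hsub hxH,
          Submodule.mem_orthogonal_singleton_iff_inner_right.mpr hx0⟩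
      obtain ⟨V', δ', hδ', hV'H', hprop'⟩ := ih W' H' hrk' hcl' hsub'
      refine ⟨V' ⊔ Submodule.span ℝ {u}, δ', hδ', ?_, ?_⟩
      · intro x hx
        rw [SetLike.mem_coe, Submodule.mem_sup] at hx
        obtain ⟨y, hy, z, hz, rfl⟩ := hx
        obtain ⟨t, rfl⟩ := Submodule.mem_span_singleton.mp hz
        have hyH : y ∈ H := (hV'H' hy).1
        exact H.add_mem hyH (hline t)
      · intro x hx v hv hltn
        obtain ⟨y, hy, z, hz, hvzy⟩ := Submodule.mem_sup.mp hv
        obtain ⟨t, rfl⟩ := Submodule.mem_span_singleton.mp hz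
        obtain ⟨hyH, hy0⟩ := hV'H' hy
        set Px : E n := x - ⟪u, x⟫_ℝ • u with hPx
        have hPxH' : Px ∈ H' := by
          rw [hH'mem]
          constructor
          · exact H.sub_mem hx (hline _)
          · rw [hPx, inner_sub_right, real_inner_smul_right, huu1]; ring
        have h5 : ⟪u, x - v⟫_ℝ = ⟪u, x⟫_ℝ - t := by
          rw [← hvzy, inner_sub_right, inner_add_right, real_inner_smul_right, hy0, huu1]
          ring
        have e : Px - y = (x - v) - ⟪u, x - v⟫_ℝ • u := by
          rw [h5, ← hvzy, hPx]
          module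
        have hd : ‖Px - y‖ < δ' := by
          rw [e]
          calc ‖(x - v) - ⟪u, x - v⟫_ℝ • u‖ ≤ ‖x - v‖ := proj_contract hunorm _
            _ < δ' := hltn
        have hPxV' : Px ∈ V' := hprop' Px hPxH' y hy hd
        have hxeq : x = Px + ⟪u, x⟫_ℝ • u := by rw [hPx]; module
        rw [hxeq]
        exact Submodule.add_mem _ (Submodule.mem_sup_left hPxV')
          (Submodule.mem_sup_right (Submodule.mem_span_singleton.mpr ⟨_, rfl⟩))

section Dset
variable {n : ℕ} (N₀ : ℕ) (π : E n)

def Dset (N₀ : ℕ) (π : E n) : Set (E n) :=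
  {x : E n | ∃ (a : Fin n → ℤ) (m : ℤ), (N₀ : ℤ) < m ∧ x = iv a + (m : ℝ) • π}

lemma iv_add (a b : Fin n → ℤ) : iv (fun i => a i + b i) = iv a + iv b := by
  ext i; simp [iv]

lemma iv_neg_sub (a b : Fin n → ℤ) : iv (fun i => -(a i) - b i) = -iv a - iv b := by
  ext i; simp [iv]

lemma iv_neg (a : Fin n → ℤ) : iv (fun i => -(a i)) = -iv a := by
  ext i; simp [iv]

lemma Dset_add : ∀ x ∈ Dset N₀ π, ∀ y ∈ Dset N₀ π, x + y ∈ Dset N₀ π := by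
  rintro x ⟨a, m, hm, rfl⟩ y ⟨b, l, hl, rfl⟩
  refine ⟨fun i => a i + b i, m + l, by omega, ?_⟩
  rw [iv_add]
  push_cast
  module

lemma Dset_zero_mem_closure : (0 : E n) ∈ closure (Dset N₀ π) := by
  rw [Metric.mem_closure_iff]
  intro ε hε
  obtain ⟨N, a, hN, ha⟩ := exists_approx π (N₀ : ℤ) hε
  refine ⟨iv (fun i => -(a i)) + (N : ℝ) • π, ⟨_, N, hN, rfl⟩, ?_⟩
  rw [dist_eq_norm, zero_sub, iv_neg]
  have heq : -(-iv a + (N : ℝ) • π) = iv a - (N : ℝ) • π := by module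
  rw [heq]; exact ha

lemma Dset_neg_mem_closure : ∀ x ∈ Dset N₀ π, -x ∈ closure (Dset N₀ π) := by
  rintro x ⟨a, m, hm, rfl⟩
  rw [Metric.mem_closure_iff]
  intro ε hε
  obtain ⟨N, b, hN, hb⟩ := exists_approx π ((N₀ : ℤ) + m) hε
  refine ⟨iv (fun i => -(a i) - b i) + (((N - m : ℤ)) : ℝ) • π, ⟨_, N - m, by omega, rfl⟩, ?_⟩
  rw [dist_eq_norm, iv_neg_sub]
  calc ‖-(iv a + (m : ℝ) • π) - (-iv a - iv b + ((N - m : ℤ) : ℝ) • π)‖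
      = ‖iv b - (N : ℝ) • π‖ := by congr 1; push_cast; module
    _ < ε := hb

def Cgrp : AddSubgroup (E n) where
  carrier := closure (Dset N₀ π)
  zero_mem' := Dset_zero_mem_closure N₀ π
  add_mem' := by
    intro x y hx hy
    obtain ⟨f, hf, hfx⟩ := mem_closure_iff_seq_limit.mp hx
    obtain ⟨g, hg, hgy⟩ := mem_closure_iff_seq_limit.mp hy
    refine mem_closure_iff_seq_limit.mpr ⟨fun j => f j + g j,
      fun j => Dset_add N₀ π _ (hf j) _ (hg j), hfx.add hgy⟩
  neg_mem' := by
    intro x hx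
    obtain ⟨f, hf, hfx⟩ := mem_closure_iff_seq_limit.mp hx
    have h1 : ∀ j, -f j ∈ closure (Dset N₀ π) := fun j => Dset_neg_mem_closure N₀ π _ (hf j)
    exact isClosed_closure.mem_of_tendsto hfx.neg (Filter.Eventually.of_forall h1)

end Dset

/-- **Kronecker–Weyl approximation.** The set `ℤⁿ + π·{m ∈ ℤ : m > N₀}` contains a dense
subset of some linear subspace `V` of `ℝⁿ`; in particular it contains points arbitrarily
close to `0`. -/
theorem stmt2 {n : ℕ} (N₀ : ℕ) (π : E n) (hπ : π ≠ 0) :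
    (∃ (V : Submodule ℝ (E n)) (S : Set (E n)),
        S ⊆ {x : E n | ∃ (a : Fin n → ℤ) (m : ℤ), (N₀ : ℤ) < m ∧ x = iv a + (m : ℝ) • π} ∧
        S ⊆ (V : Set (E n)) ∧ (V : Set (E n)) ⊆ closure S) ∧
      ∀ ε > (0 : ℝ), ∃ (N : ℤ) (a : Fin n → ℤ), (N₀ : ℤ) < N ∧ ‖iv a - (N : ℝ) • π‖ < ε := by
  constructor
  · obtain ⟨V, δ, hδ, hVC, hprop⟩ := struct (Module.finrank ℝ (⊤ : Submodule ℝ (E n))) ⊤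
      (Cgrp N₀ π) le_rfl isClosed_closure (by intro x _; simp)
    refine ⟨V, Dset N₀ π ∩ V, Set.inter_subset_left, Set.inter_subset_right, ?_⟩
    intro v hv
    rw [Metric.mem_closure_iff]
    intro ε hε
    have hvC : v ∈ closure (Dset N₀ π) := hVC hv
    obtain ⟨d, hdD, hdist⟩ := Metric.mem_closure_iff.mp hvC (min ε δ) (lt_min hε hδ)
    have hdV : d ∈ V := by
      refine hprop d (subset_closure hdD) v hv ?_
      rw [← dist_eq_norm, dist_comm]
      exact hdist.trans_le (min_le_right _ _)
    exact ⟨d, ⟨hdD, hdV⟩, hdist.trans_le (min_le_left _ _)⟩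
  · intro ε hε
    exact exists_approx π (N₀ : ℤ) hε
end
end

section
/- Let K ⊆ R^n be a compact convex set and let F = K ∩ {x : πx = π₀} be a face of K, where K ⊆ {x : πx ≤ π₀}. Then K' ∩ F = F', where K' and F' denote the Chvátal–Gomory closures of K and F respectively. -/
open scoped InnerProductSpace

noncomputable section

open Filter Topology

private lemma sm_add_le {φ : ℕ → ℕ} (h : StrictMono φ) (a b : ℕ) : φ a + b ≤ φ (a + b) := by
  induction b with
  | zero => simp
  | succ k ih =>
    have := h (show a + k < a + (k + 1) by omega)
    omega

/-- Simultaneous Diophantine approximation: arbitrarily large `q` with `q • v` near an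
integer vector, coordinatewise. -/
private lemma approx {m : ℕ} (v : Fin m → ℝ) {ε : ℝ} (hε : 0 < ε) (Q₀ : ℕ) :
    ∃ q : ℕ, Q₀ + 1 ≤ q ∧ ∃ s : Fin m → ℤ, ∀ i, |(q : ℝ) * v i - (s i : ℝ)| < ε := by
  set f : ℕ → (Fin m → ℝ) := fun q i => Int.fract ((q : ℝ) * v i) with hf
  have hmem : ∀ q, f q ∈ Set.univ.pi fun _ : Fin m => Set.Icc (0:ℝ) 1 := by
    intro q i _
    exact ⟨Int.fract_nonneg _, (Int.fract_lt_one _).le⟩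
  have hcpt : IsCompact (Set.univ.pi fun _ : Fin m => Set.Icc (0:ℝ) 1) :=
    isCompact_univ_pi fun _ => isCompact_Icc
  obtain ⟨L, -, φ, hφ, hlim⟩ := hcpt.tendsto_subseq hmem
  rw [Metric.tendsto_atTop] at hlim
  obtain ⟨N, hN⟩ := hlim (ε / 2) (by linarith)
  have hlt : φ N < φ (N + (Q₀ + 1)) := hφ (by omega)
  refine ⟨φ (N + (Q₀ + 1)) - φ N, by have := sm_add_le hφ N (Q₀ + 1); omega,
    fun i => ⌊(φ (N + (Q₀ + 1)) : ℝ) * v i⌋ - ⌊(φ N : ℝ) * v i⌋, fun i => ?_⟩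
  have h1 : dist (f (φ (N + (Q₀ + 1)))) L < ε / 2 := hN (N + (Q₀ + 1)) (by omega)
  have h2 : dist (f (φ N)) L < ε / 2 := hN N le_rfl
  have h1' : |f (φ (N + (Q₀ + 1))) i - L i| < ε / 2 :=
    lt_of_le_of_lt (by rw [← Real.dist_eq]; exact dist_le_pi_dist _ _ i) h1
  have h2' : |f (φ N) i - L i| < ε / 2 :=
    lt_of_le_of_lt (by rw [← Real.dist_eq]; exact dist_le_pi_dist _ _ i) h2
  have key : ((φ (N + (Q₀ + 1)) - φ N : ℕ) : ℝ) * v i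
      - ((⌊(φ (N + (Q₀ + 1)) : ℝ) * v i⌋ - ⌊(φ N : ℝ) * v i⌋ : ℤ) : ℝ)
      = f (φ (N + (Q₀ + 1))) i - f (φ N) i := by
    simp only [hf, Int.fract]
    push_cast [Nat.cast_sub hlt.le]
    ring
  rw [key]
  calc |f (φ (N + (Q₀ + 1))) i - f (φ N) i|
      ≤ |f (φ (N + (Q₀ + 1))) i - L i| + |f (φ N) i - L i| := by
        have := abs_sub_le (f (φ (N + (Q₀ + 1))) i) (L i) (f (φ N) i)
        rwa [abs_sub_comm (L i)] at this
    _ < ε := by linarith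

private lemma norm_le_of_coord {m : ℕ} (w : E m) {ε : ℝ} (hε : 0 ≤ ε)
    (h : ∀ i, |w i| ≤ ε) : ‖w‖ ≤ ε * Real.sqrt m := by
  rw [EuclideanSpace.norm_eq]
  have hsum : ∑ i : Fin m, ‖w i‖ ^ 2 ≤ (m : ℝ) * ε ^ 2 := by
    calc ∑ i : Fin m, ‖w i‖ ^ 2 ≤ ∑ _i : Fin m, ε ^ 2 := by
          apply Finset.sum_le_sum
          intro i _
          have := h i
          rw [Real.norm_eq_abs]
          nlinarith [abs_nonneg (w i)]
      _ = (m : ℝ) * ε ^ 2 := by simp [mul_comm]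
  calc Real.sqrt (∑ i : Fin m, ‖w i‖ ^ 2) ≤ Real.sqrt ((m : ℝ) * ε ^ 2) :=
        Real.sqrt_le_sqrt hsum
    _ = ε * Real.sqrt m := by
        rw [mul_comm (m:ℝ), Real.sqrt_mul (by positivity), Real.sqrt_sq hε]

/-- The supremum over `K` of a functional tilted strongly in the `π` direction is
eventually almost dominated by the supremum over the face. -/
private lemma faceLimit {n : ℕ} (K : Set (E n)) (hKcpt : IsCompact K)
    (π : E n) (π₀ : ℝ) (hval : ∀ x ∈ K, ⟪π, x⟫_ℝ ≤ π₀)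
    (w : E n) (a : ℝ) (ha : ∀ y ∈ K, ⟪π, y⟫_ℝ = π₀ → ⟪w, y⟫_ℝ ≤ a)
    {γ : ℝ} (hγ : 0 < γ) :
    ∃ T : ℕ, ∀ y ∈ K, ⟪w, y⟫_ℝ + (T : ℝ) * (⟪π, y⟫_ℝ - π₀) ≤ a + γ := by
  by_contra hcon
  push_neg at hcon
  choose y hyK hy using hcon
  have hcw : Continuous fun u : E n => ⟪w, u⟫_ℝ := continuous_const.inner continuous_id
  have hcπ : Continuous fun u : E n => ⟪π, u⟫_ℝ := continuous_const.inner continuous_id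
  obtain ⟨xM, hxM, hM⟩ := hKcpt.exists_isMaxOn ⟨y 0, hyK 0⟩ hcw.continuousOn
  set M := ⟪w, xM⟫_ℝ with hMdef
  obtain ⟨z, hzK, φ, hφ, hlim⟩ := hKcpt.tendsto_subseq hyK
  have hylb : ∀ k, a + γ < ⟪w, y k⟫_ℝ := by
    intro k
    have h1 := hy k
    have h2 : (k : ℝ) * (⟪π, y k⟫_ℝ - π₀) ≤ 0 :=
      mul_nonpos_of_nonneg_of_nonpos (by positivity) (by linarith [hval (y k) (hyK k)])
    linarith
  have hπlb : ∀ k : ℕ, 1 ≤ k → (a + γ - M) / (φ k : ℝ) ≤ ⟪π, y (φ k)⟫_ℝ - π₀ := by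
    intro k hk
    have hpos : 0 < φ k := lt_of_lt_of_le hk (hφ.le_apply)
    have h1 := hy (φ k)
    have hMk : ⟪w, y (φ k)⟫_ℝ ≤ M := hM (hyK (φ k))
    rw [div_le_iff₀ (by exact_mod_cast hpos)]
    nlinarith [hval (y (φ k)) (hyK (φ k))]
  have hπz : ⟪π, z⟫_ℝ = π₀ := by
    have hub : ⟪π, z⟫_ℝ ≤ π₀ := hval z hzK
    have hlim1 : Tendsto (fun k => ⟪π, y (φ k)⟫_ℝ - π₀) atTop (𝓝 (⟪π, z⟫_ℝ - π₀)) :=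
      ((hcπ.tendsto z).comp hlim).sub tendsto_const_nhds
    have hlim2 : Tendsto (fun k : ℕ => (a + γ - M) / (φ k : ℝ)) atTop (𝓝 0) :=
      tendsto_const_nhds.div_atTop (tendsto_natCast_atTop_atTop.comp hφ.tendsto_atTop)
    have := le_of_tendsto_of_tendsto hlim2 hlim1
      (by filter_upwards [eventually_ge_atTop 1] using hπlb)
    linarith
  have hzle : ⟪w, z⟫_ℝ ≤ a := ha z hzK hπz
  have hzge : a + γ ≤ ⟪w, z⟫_ℝ := by
    apply ge_of_tendsto ((hcw.tendsto z).comp hlim)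
    filter_upwards with k using (hylb (φ k)).le
  linarith

set_option maxHeartbeats 2000000 in
/-- **Homogeneity corollary.** For a compact convex set `K` and an exposed face
`F = K ∩ {x : πx = π₀}` of `K`, the CG closure commutes with taking the face:
`K' ∩ F = F'`. -/
theorem stmt6 {n : ℕ} (K : Set (E n)) (hKcpt : IsCompact K) (hKconv : Convex ℝ K)
    (π : E n) (π₀ : ℝ) (hval : ∀ x ∈ K, ⟪π, x⟫_ℝ ≤ π₀)
    (F : Set (E n)) (hF : F = K ∩ {x | ⟪π, x⟫_ℝ = π₀}) (hFne : F.Nonempty) :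
    cg K ∩ F = cg F := by
  have hFK : F ⊆ K := by rw [hF]; exact Set.inter_subset_left
  have hcπ : Continuous fun u : E n => ⟪π, u⟫_ℝ := continuous_const.inner continuous_id
  have hFcl : IsClosed F := by
    rw [hF]
    exact hKcpt.isClosed.inter (isClosed_eq hcπ continuous_const)
  have hFcpt : IsCompact F := hKcpt.of_isClosed_subset hFcl hFK
  have hFconv : Convex ℝ F := by
    rw [hF]
    refine hKconv.inter ?_
    intro x hx y hy a b ha hb hab
    simp only [Set.mem_setOf_eq] at *
    rw [inner_add_right, real_inner_smul_right, real_inner_smul_right, hx, hy]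
    linear_combination π₀ * hab
  have hπF : ∀ y ∈ F, ⟪π, y⟫_ℝ = π₀ := by
    intro y hy
    rw [hF] at hy
    exact hy.2
  ext x
  constructor
  · -- hard direction : cg K ∩ F ⊆ cg F
    rintro ⟨hxK, hxF⟩
    intro c δ hδ
    set w := iv c with hw
    have hcw : Continuous fun u : E n => ⟪w, u⟫_ℝ := continuous_const.inner continuous_id
    obtain ⟨xm, hxmF, hxm⟩ := hFcpt.exists_isMaxOn hFne hcw.continuousOn
    set a : ℝ := ⟪w, xm⟫_ℝ with hadef
    have ha : ∀ y ∈ F, ⟪w, y⟫_ℝ ≤ a := fun y hy => hxm hy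
    have haδ : a ≤ δ := hδ xm hxmF
    have hfloorδ : (⌊a⌋ : ℝ) ≤ (⌊δ⌋ : ℝ) := by exact_mod_cast Int.floor_le_floor haδ
    suffices h : ⟪w, x⟫_ℝ ≤ (⌊a⌋ : ℝ) by linarith
    apply le_of_forall_pos_le_add
    intro ε hε
    -- set up constants
    obtain ⟨R₀, hR₀⟩ := hKcpt.isBounded.exists_norm_le
    set R : ℝ := max R₀ 1 with hRdef
    have hR1 : (1:ℝ) ≤ R := le_max_right _ _
    have hR : ∀ y ∈ K, ‖y‖ ≤ R := fun y hy => le_trans (hR₀ y hy) (le_max_left _ _)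
    set m : ℝ := 1 - Int.fract a with hmdef
    have hm : 0 < m := by have := Int.fract_lt_one a; simp only [hmdef]; linarith
    set η : ℝ := min ε (m / 2) with hηdef
    have hη : 0 < η := lt_min hε (by linarith)
    set γ : ℝ := η / 4 with hγdef
    have hγ : 0 < γ := by positivity
    set ε₂ : ℝ := η / (4 * (R + 1)) with hε₂def
    have hε₂ : 0 < ε₂ := by positivity
    have hε₂R : ε₂ * (R + 1) = η / 4 := by
      rw [hε₂def]; field_simp
    set ε' : ℝ := ε₂ / (Real.sqrt (n + 1) + 1) with hε'def
    have hsqrtpos : 0 < Real.sqrt (n + 1) + 1 := by positivity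
    have hε' : 0 < ε' := by positivity
    have hε'ε₂ : ε' ≤ ε₂ := by
      rw [hε'def]
      apply div_le_self hε₂.le
      have : (0:ℝ) ≤ Real.sqrt (n+1) := Real.sqrt_nonneg _
      linarith
    -- face limit
    obtain ⟨T, hT⟩ := faceLimit K hKcpt π π₀ hval w a
      (fun y hyK hyπ => ha y (by rw [hF]; exact ⟨hyK, hyπ⟩)) hγ
    -- simultaneous approximation of (π₀, π)
    obtain ⟨q, hqT, s', hs'⟩ := approx (Fin.cons π₀ (fun i => π i)) hε' T
    have hq0 : (0:ℝ) ≤ (q:ℝ) := by positivity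
    have hqTle : (T : ℝ) ≤ (q : ℝ) := by exact_mod_cast (by omega : T ≤ q)
    set r : ℤ := s' 0 with hrdef
    set s : Fin n → ℤ := fun i => s' i.succ with hsdef
    have hr : |(q:ℝ) * π₀ - (r:ℝ)| < ε' := by
      have := hs' 0
      simpa using this
    have hsv : ∀ i, |(q:ℝ) * π i - (s i : ℝ)| < ε' := by
      intro i
      have := hs' i.succ
      simpa using this
    set d : E n := (q:ℝ) • π - iv s with hddef
    have hdcoord : ∀ i, |d i| ≤ ε' := by
      intro i
      have : d i = (q:ℝ) * π i - (s i : ℝ) := by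
        simp [hddef, iv]
      rw [this]
      exact (hsv i).le
    have hdnorm : ‖d‖ < ε₂ := by
      have h1 : ‖d‖ ≤ ε' * Real.sqrt n := norm_le_of_coord d hε'.le hdcoord
      have h2 : ε' * Real.sqrt n < ε' * (Real.sqrt (n+1) + 1) := by
        apply mul_lt_mul_of_pos_left _ hε'
        have : Real.sqrt n ≤ Real.sqrt (n+1) := Real.sqrt_le_sqrt (by push_cast; linarith)
        linarith
      have h3 : ε' * (Real.sqrt (n+1) + 1) = ε₂ := by
        rw [hε'def]
        field_simp
      linarith
    have hdy : ∀ y, ‖y‖ ≤ R → |⟪d, y⟫_ℝ| ≤ ε₂ * R := by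
      intro y hy
      calc |⟪d, y⟫_ℝ| ≤ ‖d‖ * ‖y‖ := abs_real_inner_le_norm d y
        _ ≤ ε₂ * R := by
            apply mul_le_mul hdnorm.le hy (norm_nonneg _) hε₂.le
    -- the lifted cut
    set c' : Fin n → ℤ := fun i => c i + s i with hc'def
    have hivc' : iv c' = w + iv s := by
      ext i
      simp [iv, hc'def, hw]
    have hivs : iv s = (q:ℝ) • π - d := by simp [hddef]
    have hinner : ∀ y : E n, ⟪iv c', y⟫_ℝ = ⟪w, y⟫_ℝ + (q:ℝ) * ⟪π, y⟫_ℝ - ⟪d, y⟫_ℝ := by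
      intro y
      rw [hivc', inner_add_left, hivs, inner_sub_left, real_inner_smul_left]
      ring
    set t : ℝ := γ + ε₂ * R + ε₂ with htdef
    have hδ'valid : ∀ y ∈ K, ⟪iv c', y⟫_ℝ ≤ (a + t) + (r:ℝ) := by
      intro y hy
      have e1 := hinner y
      have e2 : ⟪w, y⟫_ℝ + ((q:ℝ) * ⟪π, y⟫_ℝ - (q:ℝ) * π₀) ≤ a + γ := by
        have hTy := hT y hy
        have hπy : ⟪π, y⟫_ℝ - π₀ ≤ 0 := by linarith [hval y hy]
        have h6 : (q:ℝ) * (⟪π, y⟫_ℝ - π₀) ≤ (T:ℝ) * (⟪π, y⟫_ℝ - π₀) :=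
          mul_le_mul_of_nonpos_right hqTle hπy
        have h7 : (q:ℝ) * (⟪π, y⟫_ℝ - π₀) = (q:ℝ) * ⟪π, y⟫_ℝ - (q:ℝ) * π₀ := by ring
        have h8 : (T:ℝ) * (⟪π, y⟫_ℝ - π₀) = (T:ℝ) * ⟪π, y⟫_ℝ - (T:ℝ) * π₀ := by ring
        linarith
      have e3 : (q:ℝ) * π₀ ≤ (r:ℝ) + ε₂ := by
        have := abs_lt.mp hr
        linarith
      have e4 : -⟪d, y⟫_ℝ ≤ ε₂ * R := by
        have h5 := abs_le.mp (hdy y (hR y hy))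
        linarith [h5.1]
      rw [e1, htdef]
      linarith
    have hcut := hxK c' ((a + t) + (r:ℝ)) hδ'valid
    have hfl : ⌊(a + t) + (r:ℝ)⌋ = ⌊a + t⌋ + r := Int.floor_add_intCast _ r
    have htm : t < m := by
      rw [htdef, hγdef]
      have h1 : ε₂ * R + ε₂ = η / 4 := by rw [← hε₂R]; ring
      have h2 : η ≤ m / 2 := min_le_right _ _
      linarith
    have hfloor2 : ⌊a + t⌋ ≤ ⌊a⌋ := by
      rw [Int.floor_le_iff]
      have hfr : a - ⌊a⌋ = Int.fract a := Int.self_sub_floor a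
      have : Int.fract a = 1 - m := by rw [hmdef]; ring
      push_cast
      linarith
    -- conclude
    have hxK' : x ∈ K := hFK hxF
    have hπx : ⟪π, x⟫_ℝ = π₀ := hπF x hxF
    have hinnerx := hinner x
    rw [hπx] at hinnerx
    have hdx : |⟪d, x⟫_ℝ| ≤ ε₂ * R := hdy x (hR x hxK')
    have hdx' := abs_le.mp hdx
    have hqπ₀ : (r:ℝ) - ε₂ ≤ (q:ℝ) * π₀ := by
      have := abs_lt.mp hr
      linarith
    have hcut' : ⟪iv c', x⟫_ℝ ≤ (⌊a⌋ : ℝ) + (r : ℝ) := by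
      have : ((⌊(a + t) + (r:ℝ)⌋ : ℤ) : ℝ) ≤ (⌊a⌋ : ℝ) + (r:ℝ) := by
        rw [hfl]
        push_cast
        have : (⌊a + t⌋ : ℝ) ≤ (⌊a⌋ : ℝ) := by exact_mod_cast hfloor2
        linarith
      linarith [hcut]
    have hηε : η ≤ ε := min_le_left _ _
    have hfinal : ε₂ * (1 + R) ≤ ε := by
      have : ε₂ * (1 + R) = η / 4 := by rw [← hε₂R]; ring
      linarith
    -- ⟪w,x⟫ = ⟪iv c',x⟫ - q π₀ + ⟪d,x⟫
    linarith [hcut', hinnerx, hqπ₀, hdx'.1, hdx'.2, hfinal]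
  · -- easy direction : cg F ⊆ cg K ∩ F
    intro hx
    have hxF : x ∈ F := by
      by_contra hxF
      obtain ⟨v, hvF, hvmin⟩ :=
        exists_norm_eq_iInf_of_complete_convex hFne hFcl.isComplete hFconv x
      have hproj := (norm_eq_iInf_iff_real_inner_le_zero hFconv hvF).mp hvmin
      set u : E n := x - v with hudef
      have hune : u ≠ 0 := sub_ne_zero.mpr (fun h => hxF (h ▸ hvF))
      set g : ℝ := ‖u‖ ^ 2 with hgdef
      have hg : 0 < g := by
        have : 0 < ‖u‖ := norm_pos_iff.mpr hune
        positivity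
      have hsep : ∀ y ∈ F, ⟪u, y⟫_ℝ ≤ ⟪u, v⟫_ℝ := by
        intro y hy
        have := hproj y hy
        rw [inner_sub_right] at this
        linarith
      have hux : ⟪u, x⟫_ℝ = ⟪u, v⟫_ℝ + g := by
        have hxvu : x = v + u := by rw [hudef]; abel
        calc ⟪u, x⟫_ℝ = ⟪u, v + u⟫_ℝ := by rw [← hxvu]
          _ = ⟪u, v⟫_ℝ + ⟪u, u⟫_ℝ := inner_add_right u v u
          _ = ⟪u, v⟫_ℝ + g := by rw [real_inner_self_eq_norm_sq, hgdef]
      obtain ⟨R₀, hR₀⟩ := hFcpt.isBounded.exists_norm_le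
      set R : ℝ := max R₀ ‖x‖ + 1 with hRdef
      have hRpos : 0 < R := by
        have h1 : (0:ℝ) ≤ ‖x‖ := norm_nonneg _
        have h2 : ‖x‖ ≤ max R₀ ‖x‖ := le_max_right _ _
        linarith
      have hRF : ∀ y ∈ F, ‖y‖ ≤ R := fun y hy => by
        have := hR₀ y hy
        have := le_max_left R₀ ‖x‖
        linarith
      have hRx : ‖x‖ ≤ R := by
        have := le_max_right R₀ ‖x‖
        linarith
      set ε₂ : ℝ := g / (4 * R) with hε₂def
      have hε₂ : 0 < ε₂ := by positivity
      have hε₂R : ε₂ * R = g / 4 := by rw [hε₂def]; field_simp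
      set ε' : ℝ := ε₂ / (Real.sqrt n + 1) with hε'def
      have hε' : 0 < ε' := by positivity
      obtain ⟨q, hq1, s, hs⟩ := approx (fun i => u i) hε' 0
      have hq1' : (1:ℝ) ≤ (q:ℝ) := by exact_mod_cast hq1
      set d : E n := (q:ℝ) • u - iv s with hddef
      have hdcoord : ∀ i, |d i| ≤ ε' := by
        intro i
        have : d i = (q:ℝ) * u i - (s i : ℝ) := by simp [hddef, iv]
        rw [this]
        exact (hs i).le
      have hdnorm : ‖d‖ ≤ ε₂ := by
        have h1 : ‖d‖ ≤ ε' * Real.sqrt n := norm_le_of_coord d hε'.le hdcoord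
        have h2 : ε' * Real.sqrt n ≤ ε' * (Real.sqrt n + 1) := by
          apply mul_le_mul_of_nonneg_left _ hε'.le
          linarith
        have h3 : ε' * (Real.sqrt n + 1) = ε₂ := by
          rw [hε'def]
          have : Real.sqrt n + 1 ≠ 0 := by positivity
          field_simp
        linarith
      have hivs : iv s = (q:ℝ) • u - d := by simp [hddef]
      have hinner : ∀ y : E n, ⟪iv s, y⟫_ℝ = (q:ℝ) * ⟪u, y⟫_ℝ - ⟪d, y⟫_ℝ := by
        intro y
        rw [hivs, inner_sub_left, real_inner_smul_left]
      have hdy : ∀ y : E n, ‖y‖ ≤ R → |⟪d, y⟫_ℝ| ≤ ε₂ * R := by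
        intro y hy
        calc |⟪d, y⟫_ℝ| ≤ ‖d‖ * ‖y‖ := abs_real_inner_le_norm d y
          _ ≤ ε₂ * R := mul_le_mul hdnorm hy (norm_nonneg _) hε₂.le
      have hvalid : ∀ y ∈ F, ⟪iv s, y⟫_ℝ ≤ (q:ℝ) * ⟪u, v⟫_ℝ + ε₂ * R := by
        intro y hy
        rw [hinner y]
        have h1 : (q:ℝ) * ⟪u, y⟫_ℝ ≤ (q:ℝ) * ⟪u, v⟫_ℝ :=
          mul_le_mul_of_nonneg_left (hsep y hy) (by positivity)
        have h2 := abs_le.mp (hdy y (hRF y hy))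
        linarith
      have hcut := hx s ((q:ℝ) * ⟪u, v⟫_ℝ + ε₂ * R) hvalid
      have hfloorle : ((⌊(q:ℝ) * ⟪u, v⟫_ℝ + ε₂ * R⌋ : ℤ) : ℝ) ≤ (q:ℝ) * ⟪u, v⟫_ℝ + ε₂ * R :=
        Int.floor_le _
      have hlhs : (q:ℝ) * ⟪u, v⟫_ℝ + (q:ℝ) * g - ε₂ * R ≤ ⟪iv s, x⟫_ℝ := by
        rw [hinner x, hux]
        have h2 := abs_le.mp (hdy x hRx)
        have h3 : (q:ℝ) * (⟪u, v⟫_ℝ + g) = (q:ℝ) * ⟪u, v⟫_ℝ + (q:ℝ) * g := by ring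
        linarith
      have h9 : g ≤ (q:ℝ) * g := le_mul_of_one_le_left hg.le hq1'
      have h10 : ⟪iv s, x⟫_ℝ ≤ (q:ℝ) * ⟪u, v⟫_ℝ + ε₂ * R := le_trans hcut hfloorle
      have h11 : (q:ℝ) * g ≤ 2 * (ε₂ * R) := by linarith
      rw [hε₂R] at h11
      linarith [h9, h11, hg]
    refine ⟨?_, hxF⟩
    intro c δ h
    exact hx c δ (fun y hy => h y (hFK hy))
end
end

section
/- Let K ⊆ R^n be a closed convex set with compact face F = K ∩ {x : πx = π₀} (where πx ≤ π₀ is valid for K), and suppose cx ≤ δ is valid on F with c ∈ ℤ^n. Then the inequality cx ≤ ⌊δ⌋ is valid for K' ∩ F, where K' is the Chvátal–Gomory closure of K. -/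
open Filter Topology
open scoped InnerProductSpace

noncomputable section

lemma dirichlet_base {N : ℕ} (θ : Fin N → ℝ) (M : ℕ) (hM : 0 < M) :
    ∃ q : ℕ, 1 ≤ q ∧ ∃ w : Fin N → ℤ, ∀ i, |(q : ℝ) * θ i - w i| < 1 / M := by
  have hbox : ∀ (q : ℕ) (i : Fin N), (⌊(M : ℝ) * Int.fract ((q : ℝ) * θ i)⌋).toNat < M := by
    intro q i
    have h0 : (0:ℝ) ≤ (M : ℝ) * Int.fract ((q : ℝ) * θ i) :=
      mul_nonneg (by positivity) (Int.fract_nonneg _)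
    have h1 : (M : ℝ) * Int.fract ((q : ℝ) * θ i) < M := by
      have := Int.fract_lt_one ((q : ℝ) * θ i)
      have : (0:ℝ) < M := by exact_mod_cast hM
      nlinarith
    have : ⌊(M : ℝ) * Int.fract ((q : ℝ) * θ i)⌋ < (M : ℤ) := by
      exact_mod_cast Int.floor_lt.2 (by exact_mod_cast h1)
    omega
  let f : Fin (M ^ N + 1) → (Fin N → Fin M) := fun q i =>
    ⟨(⌊(M : ℝ) * Int.fract (((q : ℕ) : ℝ) * θ i)⌋).toNat, hbox q i⟩
  have hcard : Fintype.card (Fin N → Fin M) < Fintype.card (Fin (M ^ N + 1)) := by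
    simp [Fintype.card_fun]
  obtain ⟨a, b, hab, hfab⟩ := Fintype.exists_ne_map_eq_of_card_lt f hcard
  wlog hlt : (a : ℕ) < (b : ℕ) generalizing a b
  · exact this b a hab.symm hfab.symm (by omega)
  refine ⟨(b : ℕ) - (a : ℕ), by omega, fun i => ⌊((b : ℕ) : ℝ) * θ i⌋ - ⌊((a : ℕ) : ℝ) * θ i⌋, ?_⟩
  intro i
  have hfl : ⌊(M : ℝ) * Int.fract (((a : ℕ) : ℝ) * θ i)⌋ = ⌊(M : ℝ) * Int.fract (((b : ℕ) : ℝ) * θ i)⌋ := by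
    have := congrFun hfab i
    simp only [f, Fin.mk.injEq] at this
    have h0a : 0 ≤ ⌊(M : ℝ) * Int.fract (((a : ℕ) : ℝ) * θ i)⌋ :=
      Int.floor_nonneg.2 (mul_nonneg (by positivity) (Int.fract_nonneg _))
    have h0b : 0 ≤ ⌊(M : ℝ) * Int.fract (((b : ℕ) : ℝ) * θ i)⌋ :=
      Int.floor_nonneg.2 (mul_nonneg (by positivity) (Int.fract_nonneg _))
    omega
  have habs : |(M : ℝ) * Int.fract (((b:ℕ):ℝ) * θ i) - (M : ℝ) * Int.fract (((a:ℕ):ℝ) * θ i)| < 1 :=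
    Int.abs_sub_lt_one_of_floor_eq_floor hfl.symm
  have hMpos : (0:ℝ) < M := by exact_mod_cast hM
  have key : ((b:ℕ):ℝ) * θ i - ((a:ℕ):ℝ) * θ i
      - ((⌊((b:ℕ):ℝ) * θ i⌋ : ℝ) - (⌊((a:ℕ):ℝ) * θ i⌋ : ℝ))
      = Int.fract (((b:ℕ):ℝ) * θ i) - Int.fract (((a:ℕ):ℝ) * θ i) := by
    simp only [Int.fract]; ring
  have : |Int.fract (((b:ℕ):ℝ) * θ i) - Int.fract (((a:ℕ):ℝ) * θ i)| < 1 / M := by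
    rw [lt_div_iff₀ hMpos]
    calc |Int.fract (((b:ℕ):ℝ) * θ i) - Int.fract (((a:ℕ):ℝ) * θ i)| * M
        = |(M : ℝ) * Int.fract (((b:ℕ):ℝ) * θ i) - (M : ℝ) * Int.fract (((a:ℕ):ℝ) * θ i)| := by
          rw [← mul_sub, abs_mul, abs_of_pos hMpos]; ring
      _ < 1 := habs
  calc |((((b:ℕ) - (a:ℕ) : ℕ)) : ℝ) * θ i - ((⌊((b:ℕ):ℝ) * θ i⌋ - ⌊((a:ℕ):ℝ) * θ i⌋ : ℤ) : ℝ)|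
      = |Int.fract (((b:ℕ):ℝ) * θ i) - Int.fract (((a:ℕ):ℝ) * θ i)| := by
        rw [← key]; congr 1; push_cast [Nat.cast_sub hlt.le]; ring
    _ < 1 / M := this

lemma dirichlet {N : ℕ} (θ : Fin N → ℝ) (η : ℝ) (hη : 0 < η) (Q : ℕ) :
    ∃ q : ℕ, Q ≤ q ∧ 1 ≤ q ∧ ∃ w : Fin N → ℤ, ∀ i, |(q : ℝ) * θ i - w i| ≤ η := by
  obtain ⟨M, hM⟩ := exists_nat_gt ((Q + 1 : ℝ) / η)
  have hM0 : 0 < M := by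
    have h : (0:ℝ) < (Q + 1 : ℝ) / η := by positivity
    have h2 : (0:ℝ) < (M:ℝ) := h.trans hM
    exact_mod_cast h2
  obtain ⟨q, hq1, w, hw⟩ := dirichlet_base θ M hM0
  refine ⟨(Q + 1) * q, by nlinarith, by nlinarith, fun i => (Q + 1 : ℤ) * w i, ?_⟩
  intro i
  have h1 : |(q : ℝ) * θ i - w i| < 1 / M := hw i
  have : |(((Q + 1) * q : ℕ) : ℝ) * θ i - (((Q + 1 : ℤ) * w i : ℤ) : ℝ)|
      = (Q + 1 : ℝ) * |(q : ℝ) * θ i - w i| := by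
    rw [← abs_of_pos (show (0:ℝ) < (Q:ℝ)+1 by positivity), ← abs_mul]
    congr 1; push_cast; ring
  rw [this]
  have hQpos : (0:ℝ) < (Q:ℝ) + 1 := by positivity
  have hMpos : (0:ℝ) < (M:ℝ) := by exact_mod_cast hM0
  have : ((Q:ℝ) + 1) * |(q : ℝ) * θ i - w i| < ((Q:ℝ) + 1) * (1 / M) := by
    exact mul_lt_mul_of_pos_left h1 hQpos
  have h2 : ((Q:ℝ) + 1) * (1 / M) ≤ η := by
    rw [div_lt_iff₀ hη] at hM
    rw [mul_one_div, div_le_iff₀ hMpos]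
    nlinarith
  linarith

lemma recession {n : ℕ} {K : Set (E n)} (hKcl : IsClosed K) (hKconv : Convex ℝ K)
    {x0 : E n} (hx0 : x0 ∈ K) (y : ℕ → E n) (hy : ∀ j, y j ∈ K)
    (hny : Tendsto (fun j => ‖y j‖) atTop atTop) :
    ∃ (φ : ℕ → ℕ) (d : E n), StrictMono φ ∧ ‖d‖ = 1 ∧
      (∀ s : ℝ, 0 ≤ s → x0 + s • d ∈ K) ∧
      Tendsto (fun j => (‖y (φ j)‖)⁻¹ • y (φ j)) atTop (𝓝 d) := by
  set u : ℕ → E n := fun j => (‖y j‖)⁻¹ • y j with hu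
  have hub : ∀ j, u j ∈ Metric.closedBall (0 : E n) 1 := by
    intro j
    simp only [Metric.mem_closedBall, dist_zero_right, hu, norm_smul, norm_inv, norm_norm]
    rcases eq_or_ne (‖y j‖) 0 with h | h
    · simp [h]
    · rw [inv_mul_cancel₀ h]
  obtain ⟨d, -, φ, hφ, hconv⟩ :=
    (isCompact_closedBall (0 : E n) 1).tendsto_subseq hub
  have hyφ : Tendsto (fun j => ‖y (φ j)‖) atTop atTop :=
    hny.comp hφ.tendsto_atTop
  have hev1 : ∀ᶠ j in atTop, 1 ≤ ‖y (φ j)‖ := hyφ.eventually_ge_atTop 1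
  have hnorm1 : ‖d‖ = 1 := by
    have h1 : Tendsto (fun j => ‖u (φ j)‖) atTop (𝓝 ‖d‖) := hconv.norm
    have h2 : ∀ᶠ j in atTop, ‖u (φ j)‖ = 1 := by
      filter_upwards [hev1] with j hj
      have : y (φ j) ≠ 0 := by
        intro h; rw [h, norm_zero] at hj; linarith
      simp [hu, norm_smul, inv_mul_cancel₀ (norm_ne_zero_iff.2 this)]
    exact tendsto_nhds_unique (h1.congr' h2) tendsto_const_nhds
  refine ⟨φ, d, hφ, hnorm1, ?_, hconv⟩
  intro s hs
  set r : ℕ → ℝ := fun j => ‖y (φ j)‖ with hr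
  have hrinv : Tendsto (fun j => s / r j) atTop (𝓝 0) := by
    simpa using Tendsto.const_div_atTop hyφ s
  set z : ℕ → E n := fun j => (1 - s / r j) • x0 + (s / r j) • y (φ j) with hz
  have hzK : ∀ᶠ j in atTop, z j ∈ K := by
    have hev2 : ∀ᶠ j in atTop, s ≤ r j := hyφ.eventually_ge_atTop s
    filter_upwards [hev1, hev2] with j h1 h2
    have hr0 : (0:ℝ) < r j := lt_of_lt_of_le one_pos h1
    have ht0 : 0 ≤ s / r j := div_nonneg hs hr0.le
    have ht1 : s / r j ≤ 1 := (div_le_one hr0).2 h2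
    exact hKconv hx0 (hy (φ j)) (by linarith) ht0 (by ring)
  have hzt : Tendsto z atTop (𝓝 (x0 + s • d)) := by
    have h1 : Tendsto (fun j => (1 - s / r j) • x0) atTop (𝓝 ((1:ℝ) • x0)) := by
      exact Tendsto.smul (by simpa using (tendsto_const_nhds (x := (1:ℝ))).sub hrinv) tendsto_const_nhds
    have h2 : Tendsto (fun j => (s / r j) • y (φ j)) atTop (𝓝 (s • d)) := by
      have key : ∀ᶠ j in atTop, (s / r j) • y (φ j) = s • u (φ j) := by
        filter_upwards [hev1] with j h1
        have : r j ≠ 0 := by positivity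
        simp only [hu, smul_smul, div_eq_mul_inv]
        rfl
      exact (Tendsto.const_smul hconv s).congr' (key.mono fun j hj => hj.symm)
    simpa using h1.add h2
  exact hKcl.mem_of_tendsto hzt hzK

lemma keyL {n : ℕ} {K : Set (E n)} (hKcl : IsClosed K) (hKconv : Convex ℝ K)
    (π : E n) (π₀ : ℝ) (hval : ∀ x ∈ K, ⟪π, x⟫_ℝ ≤ π₀)
    {F : Set (E n)} (hF : F = K ∩ {x | ⟪π, x⟫_ℝ = π₀})
    (c : E n) (δ : ℝ) (hcδ : ∀ x ∈ F, ⟪c, x⟫_ℝ ≤ δ)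
    {x0 : E n} (hx0 : x0 ∈ F)
    {R : ℝ} (hR0 : 0 ≤ R) (hR : ∀ z ∈ F, ‖z‖ ≤ R)
    {ε : ℝ} (hε : 0 < ε) :
    ∃ T : ℝ, ∀ t : ℝ, T ≤ t → ∀ y ∈ K,
      ⟪c, y⟫_ℝ + ε * ‖y‖ + t * (⟪π, y⟫_ℝ - π₀) ≤ δ + ε * (R + 2) := by
  have hx0K : x0 ∈ K := (hF ▸ hx0).1
  have hx0π : ⟪π, x0⟫_ℝ = π₀ := (hF ▸ hx0).2
  set B : ℝ := δ + ε * (R + 2) with hB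
  by_contra hcon
  push_neg at hcon
  choose t ht y hyK hbig using fun j : ℕ => hcon (j : ℝ)
  set p : ℕ → ℝ := fun j => ⟪π, y j⟫_ℝ - π₀ with hp
  have hp0 : ∀ j, p j ≤ 0 := fun j => by
    have := hval (y j) (hyK j); simp only [hp]; linarith
  have star : ∀ (j : ℕ) (k : ℝ), 0 ≤ k → k ≤ (j : ℝ) →
      B < ⟪c, y j⟫_ℝ + ε * ‖y j‖ + k * p j := by
    intro j k hk0 hkj
    have h1 : t j * p j ≤ k * p j :=
      mul_le_mul_of_nonpos_right (le_trans hkj (ht j)) (hp0 j)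
    have h2 := hbig j
    simp only [hp] at h1 ⊢
    linarith
  by_cases hU : Tendsto (fun j => ‖y j‖) atTop atTop
  · -- unbounded case
    obtain ⟨φ, d, hφ, hd1, hdK, hdt⟩ := recession hKcl hKconv hx0K y hyK hU
    have hπd0 : ⟪π, d⟫_ℝ ≤ 0 := by
      have h1 := hval _ (hdK 1 zero_le_one)
      rw [inner_add_right, real_inner_smul_right] at h1
      linarith [hx0π]
    have hπd : ⟪π, d⟫_ℝ < 0 := by
      rcases lt_or_eq_of_le hπd0 with h | h
      · exact h
      · exfalso
        set s : ℝ := R + ‖x0‖ + 1 with hs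
        have hs0 : 0 ≤ s := by positivity
        have hmem : x0 + s • d ∈ F := by
          rw [hF]
          refine ⟨hdK s hs0, ?_⟩
          simp only [Set.mem_setOf_eq, inner_add_right, real_inner_smul_right, hx0π, h]
          ring
        have h2 : ‖x0 + s • d‖ ≤ R := hR _ hmem
        have h3 : s * ‖d‖ - ‖x0‖ ≤ ‖x0 + s • d‖ := by
          have := norm_add_le (x0 + s • d) (-x0)
          simp only [add_neg_cancel_comm, norm_neg, norm_smul] at this ⊢
          rw [Real.norm_eq_abs, abs_of_nonneg hs0] at this
          linarith
        rw [hd1, mul_one] at h3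
        simp only [hs] at h3
        linarith
    set μ : ℝ := -⟪π, d⟫_ℝ with hμdef
    have hμ : 0 < μ := by simp only [hμdef]; linarith
    obtain ⟨j₀, hj₀⟩ := exists_nat_ge (2 * (‖c‖ + ε + 1) / μ)
    have hj₀' : 2 * (‖c‖ + ε + 1) ≤ (j₀ : ℝ) * μ := by
      rw [div_le_iff₀ hμ] at hj₀; linarith
    have hyφ : Tendsto (fun j => ‖y (φ j)‖) atTop atTop := hU.comp hφ.tendsto_atTop
    have hinner : Tendsto (fun j => ⟪π, (‖y (φ j)‖)⁻¹ • y (φ j)⟫_ℝ) atTop (𝓝 ⟪π, d⟫_ℝ) :=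
      Tendsto.inner tendsto_const_nhds hdt
    have hevπ : ∀ᶠ j in atTop, ⟪π, (‖y (φ j)‖)⁻¹ • y (φ j)⟫_ℝ ≤ -μ / 2 := by
      have h : ⟪π, d⟫_ℝ < -μ / 2 := by simp only [hμdef]; linarith
      exact hinner.eventually_le_const h
    have hev1 : ∀ᶠ j in atTop, 1 ≤ ‖y (φ j)‖ := hyφ.eventually_ge_atTop 1
    have hevr : ∀ᶠ j in atTop, |B| + (j₀ : ℝ) * |π₀| + 1 ≤ ‖y (φ j)‖ :=
      hyφ.eventually_ge_atTop _
    have hevj : ∀ᶠ j in atTop, j₀ ≤ φ j :=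
      eventually_atTop.2 ⟨j₀, fun j hj => le_trans hj (hφ.le_apply)⟩
    obtain ⟨j, h1, hπu, hrbig, hjj⟩ := (hev1.and (hevπ.and (hevr.and hevj))).exists
    set r : ℝ := ‖y (φ j)‖ with hr
    have hr1 : 1 ≤ r := h1
    have hrpos : 0 < r := lt_of_lt_of_le one_pos hr1
    have hyu : y (φ j) = r • ((r)⁻¹ • y (φ j)) := by
      rw [smul_smul, mul_inv_cancel₀ (ne_of_gt hrpos), one_smul]
    have hpbound : p (φ j) ≤ -(μ / 2) * r - π₀ := by
      simp only [hp]
      have : ⟪π, y (φ j)⟫_ℝ = r * ⟪π, (r)⁻¹ • y (φ j)⟫_ℝ := by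
        conv_lhs => rw [hyu]
        rw [real_inner_smul_right]
      rw [this]
      have := mul_le_mul_of_nonneg_left hπu hrpos.le
      nlinarith
    have hcy : ⟪c, y (φ j)⟫_ℝ ≤ ‖c‖ * r := by
      calc ⟪c, y (φ j)⟫_ℝ ≤ ‖c‖ * ‖y (φ j)‖ := real_inner_le_norm c _
        _ = ‖c‖ * r := rfl
    have hstar := star (φ j) (j₀ : ℝ) (Nat.cast_nonneg _) (by exact_mod_cast hjj)
    have hj₀p : (j₀ : ℝ) * p (φ j) ≤ (j₀ : ℝ) * (-(μ / 2) * r - π₀) :=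
      mul_le_mul_of_nonneg_left hpbound (Nat.cast_nonneg _)
    have habs1 : (j₀ : ℝ) * (-π₀) ≤ (j₀ : ℝ) * |π₀| :=
      mul_le_mul_of_nonneg_left (neg_le_abs π₀) (Nat.cast_nonneg _)
    have hmul : 2 * (‖c‖ + ε + 1) * r ≤ ((j₀ : ℝ) * μ) * r :=
      mul_le_mul_of_nonneg_right hj₀' hrpos.le
    have hBabs : -|B| ≤ B := neg_abs_le B
    have hreq : ‖y (φ j)‖ = r := rfl
    rw [hreq] at hstar
    set A := ⟪c, y (φ j)⟫_ℝ with hA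
    set P := p (φ j) with hP
    set nc := ‖c‖ with hnc
    clear_value B μ r A P nc
    have hmul2 : 2*nc*r + 2*ε*r + 2*r ≤ ((j₀ : ℝ) * μ) * r := by nlinarith only [hmul]
    have hj₀p2 : (j₀ : ℝ) * P ≤ -(((j₀ : ℝ) * μ) * r)/2 - (j₀ : ℝ) * π₀ := by
      nlinarith only [hj₀p]
    linarith only [hstar, hcy, hj₀p2, habs1, hmul2, hrbig, hBabs]
  · -- bounded case
    rw [tendsto_atTop] at hU
    push_neg at hU
    obtain ⟨C, hC⟩ := hU
    obtain ⟨φ, hφ, hφC⟩ := extraction_of_frequently_atTop hC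
    have hCpos : 0 ≤ C := le_of_lt (lt_of_le_of_lt (norm_nonneg _) (hφC 0))
    have hmem : ∀ j, y (φ j) ∈ Metric.closedBall (0 : E n) C := fun j => by
      simp only [Metric.mem_closedBall, dist_zero_right]
      exact (hφC j).le
    obtain ⟨ys, -, ψ, hψ, hyt⟩ := (isCompact_closedBall (0 : E n) C).tendsto_subseq hmem
    set k : ℕ → ℕ := fun j => φ (ψ j) with hk
    have hkj : ∀ j : ℕ, j ≤ k j := fun j => (hφ.comp hψ).le_apply
    have hysK : ys ∈ K := hKcl.mem_of_tendsto hyt (Eventually.of_forall fun j => hyK _)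
    have hD : ∀ j, ⟪c, y (k j)⟫_ℝ + ε * ‖y (k j)‖ ≤ (‖c‖ + ε) * C := by
      intro j
      have h1 : ⟪c, y (k j)⟫_ℝ ≤ ‖c‖ * ‖y (k j)‖ := real_inner_le_norm c _
      have h2 : ‖y (k j)‖ ≤ C := (hφC (ψ j)).le
      nlinarith [norm_nonneg c, norm_nonneg (y (k j))]
    set D : ℝ := (‖c‖ + ε) * C with hD'
    have hstar2 : ∀ j : ℕ, B < ⟪c, y (k j)⟫_ℝ + ε * ‖y (k j)‖ + (j : ℝ) * p (k j) :=
      fun j => star (k j) (j : ℝ) (Nat.cast_nonneg _) (by exact_mod_cast hkj j)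
    have hplow : ∀ j : ℕ, 1 ≤ j → (B - D) / (j : ℝ) ≤ p (k j) := by
      intro j hj
      have hjpos : (0 : ℝ) < (j : ℝ) := by exact_mod_cast hj
      rw [div_le_iff₀ hjpos]
      have := hstar2 j
      have := hD j
      nlinarith
    have hpt : Tendsto (fun j => p (k j)) atTop (𝓝 (⟪π, ys⟫_ℝ - π₀)) := by
      have : Tendsto (fun j => ⟪π, y (k j)⟫_ℝ) atTop (𝓝 ⟪π, ys⟫_ℝ) :=
        Tendsto.inner tendsto_const_nhds hyt
      simpa [hp] using this.sub_const π₀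
    have hL0 : 0 ≤ ⟪π, ys⟫_ℝ - π₀ := by
      have hdiv : Tendsto (fun j : ℕ => (B - D) / (j : ℝ)) atTop (𝓝 0) :=
        tendsto_const_div_atTop_nhds_zero_nat _
      exact le_of_tendsto_of_tendsto hdiv hpt
        (eventually_atTop.2 ⟨1, fun j hj => hplow j hj⟩)
    have hysF : ys ∈ F := by
      rw [hF]
      refine ⟨hysK, ?_⟩
      have := hval ys hysK
      simp only [Set.mem_setOf_eq]
      linarith
    have hlim : B ≤ ⟪c, ys⟫_ℝ + ε * ‖ys‖ := by
      have hto : Tendsto (fun j => ⟪c, y (k j)⟫_ℝ + ε * ‖y (k j)‖) atTop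
          (𝓝 (⟪c, ys⟫_ℝ + ε * ‖ys‖)) := by
        exact ((Tendsto.inner tendsto_const_nhds hyt).add ((hyt.norm).const_mul ε))
      refine ge_of_tendsto hto (Eventually.of_forall fun j => ?_)
      have := hstar2 j
      have hjp : (j : ℝ) * p (k j) ≤ 0 :=
        mul_nonpos_of_nonneg_of_nonpos (Nat.cast_nonneg _) (hp0 _)
      linarith
    have h1 := hcδ ys hysF
    have h2 := hR ys hysF
    simp only [hB] at hlim
    nlinarith

set_option maxHeartbeats 1000000 in
/-- **Homogeneity (non-quantitative form).** Let `K` be closed convex with compact face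
`F = K ∩ {x : πx = π₀}` (where `πx ≤ π₀` is valid for `K`). If `cx ≤ δ` holds on `F`
with `c ∈ ℤⁿ`, then `cx ≤ ⌊δ⌋` is valid on `K' ∩ F`. -/
theorem stmt8 {n : ℕ} (K : Set (E n)) (hKcl : IsClosed K) (hKconv : Convex ℝ K)
    (π : E n) (π₀ : ℝ) (hval : ∀ x ∈ K, ⟪π, x⟫_ℝ ≤ π₀)
    (F : Set (E n)) (hF : F = K ∩ {x | ⟪π, x⟫_ℝ = π₀}) (hFcpt : IsCompact F)
    (c : Fin n → ℤ) (δ : ℝ) (hcδ : ∀ x ∈ F, ⟪iv c, x⟫_ℝ ≤ δ) :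
    ∀ x ∈ cg K ∩ F, ⟪iv c, x⟫_ℝ ≤ (⌊δ⌋ : ℝ) := by
  intro x hx
  obtain ⟨hxcg, hxF⟩ := hx
  have hxπ : ⟪π, x⟫_ℝ = π₀ := (hF ▸ hxF).2
  -- bound on F
  obtain ⟨R0, hRball⟩ := hFcpt.isBounded.subset_closedBall (0 : E n)
  set R : ℝ := max R0 0 with hRdef
  have hR0 : 0 ≤ R := le_max_right _ _
  have hR : ∀ z ∈ F, ‖z‖ ≤ R := by
    intro z hz
    have := hRball hz
    rw [Metric.mem_closedBall, dist_zero_right] at this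
    exact le_trans this (le_max_left _ _)
  refine le_of_forall_pos_le_add ?_
  intro ε₀ hε₀
  set γ : ℝ := (⌊δ⌋ : ℝ) + 1 - δ with hγdef
  have hγ : 0 < γ := by
    have := Int.lt_floor_add_one δ
    simp only [hγdef]; linarith
  have hx1 : (0:ℝ) < 1 + ‖x‖ := by positivity
  set ε : ℝ := min (γ / (R + 4)) (ε₀ / (1 + ‖x‖)) with hεdef
  have hεpos : 0 < ε := lt_min (by positivity) (by positivity)
  have hε1 : ε * (R + 4) ≤ γ := by
    have h := min_le_left (γ / (R + 4)) (ε₀ / (1 + ‖x‖))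
    rw [← hεdef] at h
    rw [← le_div_iff₀ (by positivity : (0:ℝ) < R + 4)]
    exact h
  have hε2 : ε * (1 + ‖x‖) ≤ ε₀ := by
    have h := min_le_right (γ / (R + 4)) (ε₀ / (1 + ‖x‖))
    rw [← hεdef] at h
    rw [← le_div_iff₀ hx1]
    exact h
  obtain ⟨T, hT⟩ := keyL hKcl hKconv π π₀ hval hF (iv c) δ hcδ hxF hR0 hR hεpos
  obtain ⟨Q, hQ⟩ := exists_nat_ge T
  set θ : Fin (n + 1) → ℝ := Fin.snoc (fun i => π i) π₀ with hθ
  have hηpos : (0:ℝ) < ε / (n + 1) := by positivity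
  obtain ⟨q, hqQ, hq1, w', hw'⟩ := dirichlet θ (ε / (n + 1)) hηpos Q
  set w : Fin n → ℤ := fun i => w' i.castSucc with hwdef
  set m : ℤ := w' (Fin.last n) with hmdef
  have hwi : ∀ i : Fin n, |(q:ℝ) * π i - (w i : ℝ)| ≤ ε / (n + 1) := by
    intro i
    have := hw' i.castSucc
    rwa [hθ, Fin.snoc_castSucc] at this
  have hεn : ε / (n + 1) ≤ ε := by
    rw [div_le_iff₀ (by positivity : (0:ℝ) < (n:ℝ) + 1)]
    nlinarith [hεpos.le, Nat.cast_nonneg (α := ℝ) n]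
  have hm : |(q:ℝ) * π₀ - (m : ℝ)| ≤ ε := by
    have := hw' (Fin.last n)
    rw [hθ, Fin.snoc_last] at this
    exact le_trans this hεn
  set e : E n := iv w - (q:ℝ) • π with he
  have henorm : ‖e‖ ≤ ε := by
    have hei : ∀ i : Fin n, ‖e i‖ ≤ ε / (n + 1) := by
      intro i
      have h := hwi i
      have hval' : e i = (w i : ℝ) - (q:ℝ) * π i := by
        simp [he, iv, PiLp.sub_apply, PiLp.smul_apply, smul_eq_mul]
      rw [hval', Real.norm_eq_abs, abs_sub_comm]
      exact h
    rw [EuclideanSpace.norm_eq]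
    have hsum : (∑ i, ‖e i‖ ^ 2) ≤ ε ^ 2 := by
      have hle : (∑ i, ‖e i‖ ^ 2) ≤ ∑ _i : Fin n, (ε / (n + 1)) ^ 2 := by
        apply Finset.sum_le_sum
        intro i _
        exact pow_le_pow_left₀ (norm_nonneg _) (hei i) 2
      have hcard : ∑ _i : Fin n, (ε / (n + 1) : ℝ) ^ 2 = (n : ℝ) * (ε / (n + 1)) ^ 2 := by
        rw [Finset.sum_const, Finset.card_univ, Fintype.card_fin, nsmul_eq_mul]
      have hn1 : (0:ℝ) < ((n:ℝ) + 1) ^ 2 := by positivity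
      have hfin : (n : ℝ) * (ε / (n + 1)) ^ 2 ≤ ε ^ 2 := by
        rw [div_pow, mul_div_assoc']
        rw [div_le_iff₀ hn1]
        have hpos : (0:ℝ) ≤ ε ^ 2 * ((n:ℝ) ^ 2 + (n:ℝ) + 1) := by positivity
        nlinarith [hpos]
      linarith
    calc Real.sqrt (∑ i, ‖e i‖ ^ 2) ≤ Real.sqrt (ε ^ 2) := Real.sqrt_le_sqrt hsum
      _ = ε := by rw [Real.sqrt_sq hεpos.le]
  have hiv : iv (fun i => c i + w i) = iv c + iv w := by
    ext i
    simp [iv]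
  have hivw : (iv w : E n) = e + (q:ℝ) • π := by rw [he]; abel
  -- validity of the integer inequality on K
  have hvalid : ∀ y ∈ K, ⟪iv (fun i => c i + w i), y⟫_ℝ ≤ δ + ε * (R + 2) + (q:ℝ) * π₀ := by
    intro y hyK
    have hsplit : ⟪iv (fun i => c i + w i), y⟫_ℝ
        = ⟪iv c, y⟫_ℝ + ⟪e, y⟫_ℝ + (q:ℝ) * ⟪π, y⟫_ℝ := by
      rw [hiv, inner_add_left, hivw, inner_add_left, real_inner_smul_left]
      ring
    have hey : ⟪e, y⟫_ℝ ≤ ε * ‖y‖ := by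
      calc ⟪e, y⟫_ℝ ≤ ‖e‖ * ‖y‖ := real_inner_le_norm e y
        _ ≤ ε * ‖y‖ := mul_le_mul_of_nonneg_right henorm (norm_nonneg y)
    have hqT : T ≤ (q:ℝ) := le_trans hQ (by exact_mod_cast hqQ)
    have hkey := hT (q:ℝ) hqT y hyK
    rw [hsplit]
    nlinarith [hkey, hey]
  have hcg := hxcg (fun i => c i + w i) (δ + ε * (R + 2) + (q:ℝ) * π₀) hvalid
  -- floor computation
  have habs := abs_le.1 hm
  have hfloor : ⌊δ + ε * (R + 2) + (q:ℝ) * π₀⌋ = m + ⌊δ⌋ := by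
    have h1 : δ + ε * (R + 2) + (q:ℝ) * π₀
        = (m : ℝ) + (δ + (ε * (R + 2) + ((q:ℝ) * π₀ - m))) := by ring
    rw [h1, Int.floor_intCast_add]
    congr 1
    set s : ℝ := ε * (R + 2) + ((q:ℝ) * π₀ - m) with hs
    have hs0 : 0 ≤ s := by
      simp only [hs]
      nlinarith only [habs.1, habs.2, hεpos.le, hR0]
    have hsγ : s < γ := by
      simp only [hs]
      nlinarith only [habs.1, habs.2, hεpos, hε1, hR0]
    rw [Int.floor_eq_iff]
    constructor
    · have := Int.floor_le δ; linarith
    · push_cast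
      simp only [hγdef] at hsγ
      linarith
  have hsplit2 : ⟪iv (fun i => c i + w i), x⟫_ℝ
      = ⟪iv c, x⟫_ℝ + ⟪e, x⟫_ℝ + (q:ℝ) * π₀ := by
    rw [hiv, inner_add_left, hivw, inner_add_left, real_inner_smul_left, hxπ]
    ring
  have hex : -(ε * ‖x‖) ≤ ⟪e, x⟫_ℝ := by
    have h1 : |⟪e, x⟫_ℝ| ≤ ‖e‖ * ‖x‖ := abs_real_inner_le_norm e x
    have h2 : ‖e‖ * ‖x‖ ≤ ε * ‖x‖ := mul_le_mul_of_nonneg_right henorm (norm_nonneg x)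
    have := (abs_le.1 h1).1
    linarith
  rw [hfloor] at hcg
  rw [hsplit2] at hcg
  push_cast at hcg
  -- conclude
  linarith only [hcg, hex, habs.1, habs.2, hε2, hεpos.le, norm_nonneg x,
    mul_le_mul_of_nonneg_right hεpos.le (norm_nonneg x)]
end
end

section
/- Let K ⊆ R^n be a compact convex set and let v ∈ K' lie on the relative boundary of K. Then v belongs to F' for some proper exposed face F of K. -/
open scoped InnerProductSpace

noncomputable section

lemma dirichlet_simul {d : ℕ} (θ : Fin d → ℝ) (N : ℕ) (hN : 0 < N) :
    ∃ (q : ℕ) (p : Fin d → ℤ), 1 ≤ q ∧ ∀ i, |(q : ℝ) * θ i - p i| ≤ 1 / N := by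
  have hNR : (0:ℝ) < N := by exact_mod_cast hN
  -- bucket map
  set g : ℕ → (Fin d → Fin N) := fun j i =>
    ⟨(⌊(N:ℝ) * Int.fract ((j:ℝ) * θ i)⌋).toNat, by
      have h1 : Int.fract ((j:ℝ) * θ i) < 1 := Int.fract_lt_one _
      have h0 : (0:ℝ) ≤ Int.fract ((j:ℝ) * θ i) := Int.fract_nonneg _
      have : ⌊(N:ℝ) * Int.fract ((j:ℝ) * θ i)⌋ < (N:ℤ) := by
        rw [Int.floor_lt]
        push_cast
        nlinarith
      omega⟩ with hg
  obtain ⟨j, hj, j', hj', hne, heq⟩ :=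
    Finset.exists_ne_map_eq_of_card_lt_of_maps_to (s := Finset.range (N ^ d + 1))
      (t := (Finset.univ : Finset (Fin d → Fin N))) (by
        simp [Finset.card_univ]) (f := g) (fun a _ => Finset.mem_univ _)
  -- WLOG j < j'
  wlog hlt : j < j' generalizing j j'
  · exact this j' hj' j hj hne.symm heq.symm (by omega)
  refine ⟨j' - j, fun i => ⌊(j':ℝ) * θ i⌋ - ⌊(j:ℝ) * θ i⌋, by omega, fun i => ?_⟩
  have hfl : ⌊(N:ℝ) * Int.fract ((j:ℝ) * θ i)⌋ = ⌊(N:ℝ) * Int.fract ((j':ℝ) * θ i)⌋ := by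
    have := congrFun heq i
    simp only [hg, Fin.mk.injEq] at this
    have h0 : (0:ℤ) ≤ ⌊(N:ℝ) * Int.fract ((j:ℝ) * θ i)⌋ :=
      Int.floor_nonneg.2 (mul_nonneg hNR.le (Int.fract_nonneg _))
    have h0' : (0:ℤ) ≤ ⌊(N:ℝ) * Int.fract ((j':ℝ) * θ i)⌋ :=
      Int.floor_nonneg.2 (mul_nonneg hNR.le (Int.fract_nonneg _))
    omega
  have key : |Int.fract ((j':ℝ) * θ i) - Int.fract ((j:ℝ) * θ i)| ≤ 1 / N := by
    set a := Int.fract ((j:ℝ) * θ i)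
    set b := Int.fract ((j':ℝ) * θ i)
    have h1 : ((⌊(N:ℝ) * a⌋ : ℝ)) ≤ (N:ℝ) * a := Int.floor_le _
    have h2 : (N:ℝ) * a < ⌊(N:ℝ) * a⌋ + 1 := Int.lt_floor_add_one _
    have h3 : ((⌊(N:ℝ) * b⌋ : ℝ)) ≤ (N:ℝ) * b := Int.floor_le _
    have h4 : (N:ℝ) * b < ⌊(N:ℝ) * b⌋ + 1 := Int.lt_floor_add_one _
    have h5 : ((⌊(N:ℝ) * a⌋ : ℝ)) = ((⌊(N:ℝ) * b⌋ : ℝ)) := by exact_mod_cast hfl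
    rw [abs_le]
    constructor
    · rw [neg_le, neg_sub, le_div_iff₀ hNR]; nlinarith
    · rw [le_div_iff₀ hNR]; nlinarith
  have hcast : ((j' - j : ℕ) : ℝ) = (j' : ℝ) - j := by
    push_cast [Nat.cast_sub hlt.le]; ring
  have : ((j' - j : ℕ) : ℝ) * θ i - ((⌊(j':ℝ) * θ i⌋ - ⌊(j:ℝ) * θ i⌋ : ℤ) : ℝ)
      = Int.fract ((j':ℝ) * θ i) - Int.fract ((j:ℝ) * θ i) := by
    rw [hcast]; unfold Int.fract; push_cast; ring
  rw [this]; exact key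


lemma coord_abs_le_norm {n : ℕ} (x : E n) (i : Fin n) : |x i| ≤ ‖x‖ := by
  have h := EuclideanSpace.norm_eq x
  rw [h]
  have h1 : |x i| = Real.sqrt (‖x i‖ ^ 2) := by
    rw [Real.sqrt_sq_eq_abs]; simp [Real.norm_eq_abs, abs_abs]
  rw [h1]
  apply Real.sqrt_le_sqrt
  exact Finset.single_le_sum (f := fun j => ‖x j‖ ^ 2) (fun j _ => by positivity)
    (Finset.mem_univ i)

lemma inner_abs_bound {n : ℕ} (u x : E n) (a : ℝ) (hu : ∀ i, |u i| ≤ a) :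
    |⟪u, x⟫_ℝ| ≤ n * a * ‖x‖ := by
  have : ⟪u, x⟫_ℝ = ∑ i, u i * x i := by
    simp [PiLp.inner_apply, RCLike.inner_apply, mul_comm]
  rw [this]
  calc |∑ i, u i * x i| ≤ ∑ i, |u i * x i| := Finset.abs_sum_le_sum_abs _ _
    _ ≤ ∑ _i : Fin n, a * ‖x‖ := by
        apply Finset.sum_le_sum
        intro i _
        rw [abs_mul]
        exact mul_le_mul (hu i) (coord_abs_le_norm x i) (abs_nonneg _)
          ((abs_nonneg (u i)).trans (hu i))
    _ = n * a * ‖x‖ := by simp [Finset.sum_const]; ring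

lemma exists_q0 {n : ℕ} (K : Set (E n)) (hKcpt : IsCompact K)
    (π : E n) (π₀ : ℝ) (hsupp : ∀ x ∈ K, ⟪π, x⟫_ℝ ≤ π₀)
    (c : Fin n → ℤ) (δ : ℝ) (hF : ∀ y ∈ K, ⟪π, y⟫_ℝ = π₀ → ⟪iv c, y⟫_ℝ ≤ δ) :
    ∃ q₀ : ℝ, 0 ≤ q₀ ∧ ∀ x ∈ K,
      ⟪iv c, x⟫_ℝ + q₀ * (⟪π, x⟫_ℝ - π₀) < (⌊δ⌋ : ℝ) + 1 := by
  by_contra hcon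
  push_neg at hcon
  set β : ℝ := (⌊δ⌋ : ℝ) + 1 with hβ
  set t : ℕ → Set (E n) := fun k =>
    {x ∈ K | β ≤ ⟪iv c, x⟫_ℝ + (k : ℝ) * (⟪π, x⟫_ℝ - π₀)} with ht
  have hcont : ∀ k : ℕ, Continuous fun x : E n => ⟪iv c, x⟫_ℝ + (k : ℝ) * (⟪π, x⟫_ℝ - π₀) := by
    intro k
    exact ((continuous_const.inner continuous_id).add
      (continuous_const.mul ((continuous_const.inner continuous_id).sub continuous_const)))
  have htcl : ∀ k, IsClosed (t k) := fun k =>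
    hKcpt.isClosed.inter (isClosed_le continuous_const (hcont k))
  have htK : ∀ k, t k ⊆ K := fun k => Set.sep_subset _ _
  have htc : ∀ k, IsCompact (t k) := fun k => hKcpt.of_isClosed_subset (htcl k) (htK k)
  have htn : ∀ k, (t k).Nonempty := by
    intro k
    obtain ⟨x, hxK, hxv⟩ := hcon (k : ℝ) (Nat.cast_nonneg k)
    exact ⟨x, hxK, hxv⟩
  have htd : ∀ k, t (k + 1) ⊆ t k := by
    intro k x hx
    refine ⟨hx.1, le_trans hx.2 ?_⟩
    have hπx : ⟪π, x⟫_ℝ - π₀ ≤ 0 := sub_nonpos.2 (hsupp x hx.1)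
    have : ((k:ℝ) + 1) * (⟪π, x⟫_ℝ - π₀) ≤ (k : ℝ) * (⟪π, x⟫_ℝ - π₀) := by nlinarith
    push_cast
    linarith
  obtain ⟨x, hx⟩ := IsCompact.nonempty_iInter_of_sequence_nonempty_isCompact_isClosed
    t htd htn (htc 0) htcl
  simp only [Set.mem_iInter] at hx
  have hxK : x ∈ K := (hx 0).1
  have hπx : ⟪π, x⟫_ℝ = π₀ := by
    by_contra hne
    have hlt : ⟪π, x⟫_ℝ - π₀ < 0 := lt_of_le_of_ne (sub_nonpos.2 (hsupp x hxK))
      (sub_ne_zero.2 hne)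
    obtain ⟨k, hk⟩ := exists_nat_gt ((⟪iv c, x⟫_ℝ - β) / (π₀ - ⟪π, x⟫_ℝ))
    have h2 := (hx k).2
    rw [div_lt_iff₀ (by linarith)] at hk
    nlinarith
  have h0 := (hx 0).2
  simp only [Nat.cast_zero, zero_mul, add_zero] at h0
  have hδ := hF x hxK hπx
  have hβδ : δ < β := by rw [hβ]; exact Int.lt_floor_add_one δ
  linarith

set_option maxHeartbeats 1000000 in
lemma cg_face {n : ℕ} (K : Set (E n)) (hKcpt : IsCompact K)
    (π : E n) (π₀ : ℝ) (hsupp : ∀ x ∈ K, ⟪π, x⟫_ℝ ≤ π₀)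
    (v : E n) (hvK : v ∈ K) (hvπ : ⟪π, v⟫_ℝ = π₀) (hv : v ∈ cg K) :
    v ∈ cg (K ∩ {x | ⟪π, x⟫_ℝ = π₀}) := by
  intro c δ hcδ
  have hF : ∀ y ∈ K, ⟪π, y⟫_ℝ = π₀ → ⟪iv c, y⟫_ℝ ≤ δ := fun y hy hyπ => hcδ y ⟨hy, hyπ⟩
  refine le_of_forall_pos_le_add fun ε hε => ?_
  obtain ⟨q₀, hq₀, hq₀K⟩ := exists_q0 K hKcpt π π₀ hsupp c δ hF
  set β : ℝ := (⌊δ⌋ : ℝ) + 1 with hβ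
  -- margin η
  have hKne : K.Nonempty := ⟨v, hvK⟩
  have hgc : Continuous fun x : E n => ⟪iv c, x⟫_ℝ + q₀ * (⟪π, x⟫_ℝ - π₀) :=
    (continuous_const.inner continuous_id).add
      (continuous_const.mul ((continuous_const.inner continuous_id).sub continuous_const))
  obtain ⟨xm, hxmK, hxm⟩ := hKcpt.exists_isMaxOn hKne hgc.continuousOn
  set η : ℝ := β - (⟪iv c, xm⟫_ℝ + q₀ * (⟪π, xm⟫_ℝ - π₀)) with hη
  have hηpos : 0 < η := by
    have := hq₀K xm hxmK
    simp only [hη]; linarith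
  have hmargin : ∀ x ∈ K, ⟪iv c, x⟫_ℝ + q₀ * (⟪π, x⟫_ℝ - π₀) ≤ β - η := by
    intro x hxK
    have := hxm hxK
    simp only [hη]
    simp only [Set.mem_setOf_eq] at this ⊢
    linarith [this]
  -- norm bound on K
  obtain ⟨R, hR⟩ := hKcpt.isBounded.subset_closedBall 0
  have hRK : ∀ x ∈ K, ‖x‖ ≤ R := by
    intro x hx
    have := hR hx
    simpa [Metric.mem_closedBall, dist_eq_norm] using this
  have hR0 : 0 ≤ R := (norm_nonneg v).trans (hRK v hvK)
  -- choose λ and N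
  set lam : ℕ := ⌈q₀⌉₊ + 1 with hlam
  have hlam1 : (1:ℝ) ≤ lam := by
    have : (1:ℕ) ≤ lam := by omega
    exact_mod_cast this
  have hlamq₀ : q₀ ≤ (lam : ℝ) := by
    calc q₀ ≤ (⌈q₀⌉₊ : ℝ) := Nat.le_ceil q₀
      _ ≤ (lam : ℝ) := by exact_mod_cast Nat.le_succ _
  obtain ⟨N, hN⟩ := exists_nat_gt (max ((lam : ℝ) * (1 + n * R) / η)
    ((lam : ℝ) * (1 + n * ‖v‖) / ε))
  have hNpos : 0 < N := by
    have h1 : (0:ℝ) < (lam : ℝ) * (1 + n * R) / η := by positivity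
    have : (0:ℝ) < N := lt_of_lt_of_le h1 ((le_max_left _ _).trans hN.le)
    exact_mod_cast this
  have hNR : (0:ℝ) < N := by exact_mod_cast hNpos
  -- Dirichlet
  set θ : Fin (n + 1) → ℝ := Fin.cons π₀ (fun i => π i) with hθ
  obtain ⟨q, p, hq1, hp⟩ := dirichlet_simul θ N hNpos
  set m : ℕ := lam * q with hm
  have hmq₀ : q₀ ≤ (m : ℝ) := by
    have h1 : (1:ℝ) ≤ (q:ℝ) := by exact_mod_cast hq1
    have : (lam : ℝ) ≤ (m : ℝ) := by
      rw [hm]; push_cast; nlinarith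
    linarith
  set ε' : ℝ := (lam : ℝ) / N with hε'
  have hε'pos : 0 < ε' := by positivity
  have hP : ∀ i, |(m : ℝ) * θ i - ((lam * p i : ℤ) : ℝ)| ≤ ε' := by
    intro i
    have h := hp i
    have heq : (m : ℝ) * θ i - ((lam * p i : ℤ) : ℝ) = (lam : ℝ) * ((q : ℝ) * θ i - p i) := by
      push_cast [hm]; ring
    rw [heq, abs_mul, abs_of_nonneg (by positivity : (0:ℝ) ≤ (lam:ℝ))]
    rw [hε']
    calc (lam : ℝ) * |(q : ℝ) * θ i - p i| ≤ (lam : ℝ) * (1 / N) := by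
          exact mul_le_mul_of_nonneg_left h (by positivity)
      _ = (lam : ℝ) / N := by ring
  set p₀ : ℤ := lam * p 0 with hp₀
  set p' : Fin n → ℤ := fun i => lam * p i.succ with hp'
  have habs0 : |(m : ℝ) * π₀ - p₀| ≤ ε' := by
    have := hP 0
    simpa [hθ, hp₀] using this
  set u : E n := iv p' - (m : ℝ) • π with hu
  have huc : ∀ i, |u i| ≤ ε' := by
    intro i
    have := hP i.succ
    simp only [hθ, Fin.cons_succ] at this
    have heq : u i = -((m : ℝ) * π i - ((lam * p i.succ : ℤ) : ℝ)) := by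
      simp [hu, hp', iv, PiLp.sub_apply, PiLp.smul_apply, smul_eq_mul]
      all_goals ring
    rw [heq, abs_neg]
    exact this
  -- choice bounds
  have hbound1 : ε' * (1 + n * R) < η := by
    have h1 : (lam : ℝ) * (1 + n * R) / η < N := (le_max_left _ _).trans_lt hN
    rw [div_lt_iff₀ hηpos] at h1
    rw [hε', div_mul_eq_mul_div, div_lt_iff₀ hNR]
    nlinarith
  have hbound2 : ε' * (1 + n * ‖v‖) ≤ ε := by
    have h1 : (lam : ℝ) * (1 + n * ‖v‖) / ε < N := (le_max_right _ _).trans_lt hN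
    rw [div_lt_iff₀ hε] at h1
    rw [hε', div_mul_eq_mul_div, div_le_iff₀ hNR]
    nlinarith
  -- valid inequality on K
  have hivadd : iv (c + p') = iv c + iv p' := by
    ext i
    simp only [iv, Pi.add_apply, Int.cast_add]
    rfl
  have hsplit : ∀ x : E n, ⟪iv (c + p'), x⟫_ℝ
      = ⟪iv c, x⟫_ℝ + (m : ℝ) * ⟪π, x⟫_ℝ + ⟪u, x⟫_ℝ := by
    intro x
    rw [hivadd, inner_add_left]
    have : iv p' = u + (m : ℝ) • π := by rw [hu]; abel
    rw [this, inner_add_left, real_inner_smul_left]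
    ring
  set δ' : ℝ := (p₀ : ℝ) + (β - η) + ε' + ε' * n * R with hδ'
  have hvalid : ∀ y ∈ K, ⟪iv (c + p'), y⟫_ℝ ≤ δ' := by
    intro y hyK
    rw [hsplit y]
    have h1 : ⟪iv c, y⟫_ℝ + (m : ℝ) * ⟪π, y⟫_ℝ
        = (⟪iv c, y⟫_ℝ + (m : ℝ) * (⟪π, y⟫_ℝ - π₀)) + (m : ℝ) * π₀ := by ring
    have h2 : (m : ℝ) * (⟪π, y⟫_ℝ - π₀) ≤ q₀ * (⟪π, y⟫_ℝ - π₀) := by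
      have hy0 : ⟪π, y⟫_ℝ - π₀ ≤ 0 := sub_nonpos.2 (hsupp y hyK)
      nlinarith
    have h3 : ⟪iv c, y⟫_ℝ + q₀ * (⟪π, y⟫_ℝ - π₀) ≤ β - η := hmargin y hyK
    have h4 : (m : ℝ) * π₀ ≤ (p₀ : ℝ) + ε' := by
      have := abs_le.1 habs0
      linarith [this.2]
    have h5 : ⟪u, y⟫_ℝ ≤ ε' * n * R := by
      have h6 := (abs_le.1 (inner_abs_bound u y ε' huc)).2
      have h7 : (n : ℝ) * ε' * ‖y‖ ≤ ε' * n * R := by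
        have h8 : (n:ℝ) * ε' * ‖y‖ ≤ (n:ℝ) * ε' * R :=
          mul_le_mul_of_nonneg_left (hRK y hyK)
            (mul_nonneg (Nat.cast_nonneg n) hε'pos.le)
        linarith
      linarith
    rw [hδ']
    linarith
  -- apply cg
  have hcut := hv (c + p') δ' hvalid
  have hfloor : (⌊δ'⌋ : ℝ) ≤ (p₀ : ℝ) + (⌊δ⌋ : ℝ) := by
    have h1 : δ' = (p₀ : ℤ) + ((β - η) + ε' + ε' * n * R) := by rw [hδ']; push_cast; ring
    rw [h1, Int.floor_intCast_add]
    push_cast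
    have h2 : ⌊(β - η) + ε' + ε' * n * R⌋ ≤ ⌊δ⌋ := by
      have h3 : (β - η) + ε' + ε' * n * R < β := by
        have : ε' + ε' * n * R = ε' * (1 + n * R) := by ring
        linarith [hbound1, this ▸ le_refl (ε' + ε' * n * R)]
      have h4 : (β - η) + ε' + ε' * n * R < ((⌊δ⌋ + 1 : ℤ) : ℝ) := by
        push_cast; rw [hβ] at h3; linarith
      have := Int.floor_lt.2 h4
      omega
    have h5 : ((⌊(β - η) + ε' + ε' * n * R⌋ : ℤ) : ℝ) ≤ ((⌊δ⌋ : ℤ) : ℝ) := by exact_mod_cast h2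
    linarith
  -- lower bound on ⟪iv p', v⟫
  have hlower : (p₀ : ℝ) - ε' - ε' * n * ‖v‖ ≤ ⟪iv p', v⟫_ℝ := by
    have hsp : ⟪iv p', v⟫_ℝ = (m : ℝ) * π₀ + ⟪u, v⟫_ℝ := by
      have : iv p' = u + (m : ℝ) • π := by rw [hu]; abel
      rw [this, inner_add_left, real_inner_smul_left, hvπ]
      ring
    rw [hsp]
    have h1 : (p₀ : ℝ) - ε' ≤ (m : ℝ) * π₀ := by
      have := abs_le.1 habs0
      linarith [this.1]
    have h2 : -(ε' * n * ‖v‖) ≤ ⟪u, v⟫_ℝ := by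
      have h6 := (abs_le.1 (inner_abs_bound u v ε' huc)).1
      have h9 : (n:ℝ) * ε' * ‖v‖ = ε' * n * ‖v‖ := by ring
      linarith
    linarith
  have hfin : ⟪iv c, v⟫_ℝ = ⟪iv (c + p'), v⟫_ℝ - ⟪iv p', v⟫_ℝ := by
    rw [hivadd, inner_add_left]; ring
  rw [hfin]
  have : ⟪iv (c + p'), v⟫_ℝ ≤ (p₀ : ℝ) + (⌊δ⌋ : ℝ) := le_trans hcut hfloor
  have hfinal : ⟪iv (c + p'), v⟫_ℝ - ⟪iv p', v⟫_ℝ ≤ (⌊δ⌋ : ℝ) + ε' * (1 + n * ‖v‖) := by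
    have : ε' + ε' * n * ‖v‖ = ε' * (1 + n * ‖v‖) := by ring
    linarith
  linarith

set_option maxHeartbeats 1000000 in
lemma exposed_face_of_intrinsicFrontier {n : ℕ} (K : Set (E n)) (hKcpt : IsCompact K)
    (hKconv : Convex ℝ K) (v : E n) (hvbd : v ∈ intrinsicFrontier ℝ K) :
    ∃ (π : E n) (π₀ : ℝ), (∀ x ∈ K, ⟪π, x⟫_ℝ ≤ π₀) ∧ v ∈ K ∧ ⟪π, v⟫_ℝ = π₀ ∧
      ∃ x₀ ∈ K, ⟪π, x₀⟫_ℝ < π₀ := by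
  have hvK : v ∈ K := intrinsicFrontier_subset hKcpt.isClosed hvbd
  set S := affineSpan ℝ K with hS
  have hvS : v ∈ S := subset_affineSpan ℝ K hvK
  set V := S.direction with hV
  -- the translated set inside the direction submodule
  set C : Set V := {y : V | (y : E n) + v ∈ K} with hC
  have hCconv : Convex ℝ C := by
    intro y₁ h₁ y₂ h₂ a b ha hb hab
    simp only [hC, Set.mem_setOf_eq] at h₁ h₂ ⊢
    have hmem := hKconv h₁ h₂ ha hb hab
    have heq : ((a • y₁ + b • y₂ : V) : E n) + v
        = a • ((y₁ : E n) + v) + b • ((y₂ : E n) + v) := by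
      have h3 : a • ((y₁ : E n) + v) + b • ((y₂ : E n) + v)
          = (a • (y₁ : E n) + b • (y₂ : E n)) + (a • v + b • v) := by
        rw [smul_add, smul_add]; abel
      have h4 : a • v + b • v = v := by rw [← add_smul, hab, one_smul]
      rw [h3, h4]
      simp [Submodule.coe_add, SetLike.val_smul]
    rw [heq]
    exact hmem
  -- interior of C is nonempty
  obtain ⟨w, hw⟩ := Set.Nonempty.intrinsicInterior hKconv ⟨v, hvK⟩
  obtain ⟨w', hw', hww⟩ := hw
  obtain ⟨ε₁, hε₁, hball₁⟩ := Metric.mem_nhds_iff.1 (mem_interior_iff_mem_nhds.1 hw')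
  have hwS : w ∈ S := by rw [← hww]; exact w'.2
  have hwvV : w - v ∈ V := by
    have := AffineSubspace.vsub_mem_direction hwS hvS
    simpa [vsub_eq_sub] using this
  have ha₀ : (⟨w - v, hwvV⟩ : V) ∈ interior C := by
    rw [mem_interior_iff_mem_nhds, Metric.mem_nhds_iff]
    refine ⟨ε₁, hε₁, ?_⟩
    intro y hy
    simp only [Metric.mem_ball] at hy
    have hymem : (y : E n) + v ∈ S := by
      have := AffineSubspace.vadd_mem_of_mem_direction (y.2 : (y:E n) ∈ V) hvS
      simpa [vadd_eq_add, add_comm] using this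
    set z : S := ⟨(y : E n) + v, hymem⟩ with hz
    have hdist : dist z w' < ε₁ := by
      rw [Subtype.dist_eq, dist_eq_norm]
      rw [Subtype.dist_eq, dist_eq_norm] at hy
      have h21 : (z : E n) - (w' : E n) = (y : E n) - (w - v) := by
        show (y : E n) + v - (w' : E n) = (y : E n) - (w - v)
        rw [hww]
        abel
      rw [h21]
      exact hy
    have := hball₁ (Metric.mem_ball.2 hdist)
    simpa [hC, hz] using this
  -- 0 is not in the interior of C
  have h0C : (0 : V) ∉ interior C := by
    intro h0
    obtain ⟨ε₂, hε₂, hball₂⟩ := Metric.mem_nhds_iff.1 (mem_interior_iff_mem_nhds.1 h0)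
    have hvint : v ∈ intrinsicInterior ℝ K := by
      refine ⟨⟨v, hvS⟩, ?_, rfl⟩
      rw [mem_interior_iff_mem_nhds, Metric.mem_nhds_iff]
      refine ⟨ε₂, hε₂, ?_⟩
      intro z hz
      simp only [Metric.mem_ball] at hz
      have hzV : (z : E n) - v ∈ V := by
        have := AffineSubspace.vsub_mem_direction z.2 hvS
        simpa [vsub_eq_sub] using this
      set y : V := ⟨(z : E n) - v, hzV⟩ with hy
      have hdy : dist y 0 < ε₂ := by
        rw [Subtype.dist_eq, dist_eq_norm]
        show ‖(z : E n) - v - (0 : E n)‖ < ε₂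
        rw [sub_zero]
        rw [Subtype.dist_eq, dist_eq_norm] at hz
        exact hz
      have := hball₂ (Metric.mem_ball.2 hdy)
      simp only [hC, Set.mem_setOf_eq, hy] at this
      simpa using this
    rw [← intrinsicClosure_diff_intrinsicInterior] at hvbd
    exact hvbd.2 hvint
  -- separation
  obtain ⟨f, hf⟩ := geometric_hahn_banach_open_point (hCconv.interior) isOpen_interior h0C
  have hf0 : ∀ a ∈ interior C, f a < 0 := by
    intro a haint
    have := hf a haint
    simpa using this
  have hfC : ∀ y ∈ C, f y ≤ 0 := by
    intro y hy
    by_contra hcon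
    push_neg at hcon
    set a₀ : V := ⟨w - v, hwvV⟩ with ha₀def
    have hfa₀ : f a₀ < 0 := hf0 a₀ ha₀
    set t : ℝ := f y / (f y - f a₀) with htdef
    have hden : 0 < f y - f a₀ := by linarith
    have ht0 : 0 < t := div_pos hcon hden
    have ht1 : t ≤ 1 := by
      rw [div_le_one hden]; linarith
    have hz := hCconv.combo_interior_closure_mem_interior ha₀ (subset_closure hy)
      ht0 (by linarith : (0:ℝ) ≤ 1 - t) (by ring)
    have hval : f (t • a₀ + (1 - t) • y) = t * f a₀ + (1 - t) * f y := by
      simp [map_add, map_smul, smul_eq_mul]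
    have hzero : t * f a₀ + (1 - t) * f y = 0 := by
      rw [htdef]; field_simp; ring
    have := hf0 _ hz
    rw [hval, hzero] at this
    exact lt_irrefl 0 this
  -- build π via Riesz representation
  set w₀ : V := (InnerProductSpace.toDual ℝ V).symm f with hw₀
  set π : E n := (w₀ : E n) with hπ
  set π₀ : ℝ := ⟪π, v⟫_ℝ with hπ₀
  have hkey : ∀ (x : E n) (hx : x - v ∈ V), ⟪π, x⟫_ℝ - π₀ = f ⟨x - v, hx⟩ := by
    intro x hx
    rw [hπ₀, ← inner_sub_right]
    have h7 : ⟪π, x - v⟫_ℝ = ⟪w₀, (⟨x - v, hx⟩ : V)⟫_ℝ := by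
      rw [Submodule.coe_inner]
    rw [h7, hw₀, InnerProductSpace.toDual_symm_apply]
  have hmemV : ∀ x ∈ K, x - v ∈ V := by
    intro x hx
    have := AffineSubspace.vsub_mem_direction (subset_affineSpan ℝ K hx) hvS
    simpa [vsub_eq_sub] using this
  refine ⟨π, π₀, ?_, hvK, rfl, ?_⟩
  · intro x hx
    have h8 := hkey x (hmemV x hx)
    have h9 : (⟨x - v, hmemV x hx⟩ : V) ∈ C := by
      simp only [hC, Set.mem_setOf_eq]
      simpa [sub_add_cancel] using hx
    have := hfC _ h9
    linarith
  · -- proper point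
    set a₀ : V := ⟨w - v, hwvV⟩ with ha₀def
    have ha₀C : a₀ ∈ C := interior_subset ha₀
    refine ⟨(a₀ : E n) + v, ha₀C, ?_⟩
    have hmm : ((a₀ : E n) + v) - v ∈ V := by simpa using a₀.2
    have h10 := hkey ((a₀ : E n) + v) hmm
    have h11 : (⟨((a₀ : E n) + v) - v, hmm⟩ : V) = a₀ := by
      ext; simp
    rw [h11] at h10
    have := hf0 a₀ ha₀
    linarith

/-- A point of the CG closure lying on the relative (intrinsic) boundary of a compact
convex set `K` belongs to the CG closure of some proper exposed face of `K`. -/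
theorem stmt12 {n : ℕ} (K : Set (E n)) (hKcpt : IsCompact K) (hKconv : Convex ℝ K)
    (v : E n) (hv : v ∈ cg K) (hvbd : v ∈ intrinsicFrontier ℝ K) :
    ∃ (π : E n) (π₀ : ℝ), (∀ x ∈ K, ⟪π, x⟫_ℝ ≤ π₀) ∧
      (K ∩ {x | ⟪π, x⟫_ℝ = π₀}).Nonempty ∧
      K ∩ {x | ⟪π, x⟫_ℝ = π₀} ≠ K ∧
      v ∈ cg (K ∩ {x | ⟪π, x⟫_ℝ = π₀}) := by
  obtain ⟨π, π₀, hsupp, hvK, hvπ, x₀, hx₀K, hx₀lt⟩ :=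
    exposed_face_of_intrinsicFrontier K hKcpt hKconv v hvbd
  refine ⟨π, π₀, hsupp, ⟨v, hvK, hvπ⟩, ?_,
    cg_face K hKcpt π π₀ hsupp v hvK hvπ hv⟩
  intro hEq
  have hx₀F : x₀ ∈ K ∩ {x | ⟪π, x⟫_ℝ = π₀} := hEq.symm ▸ hx₀K
  exact absurd hx₀F.2 (ne_of_lt hx₀lt)
end
end

section
/- Let V ⊆ R^n be a rational affine subspace with lineality (direction) space W, let D be the orthogonal projection of ℤ^n onto W, and fix d ∈ D and a rational point x₀ ∈ V. Then over all c ∈ ℤ^n projecting to d and all δ ∈ ℝ, the values ⌊δ⌋ − (c − d)x₀ range over a discrete subset of ℝ. Consequently, among all CG cuts cx ≤ ⌊δ⌋ of a nonempty compact convex set K with c projecting to d, restricted to V there is one implying all the others (a deepest cut), provided K ∩ V ≠ ∅. -/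
open scoped InnerProductSpace

noncomputable section

lemma rat_mul_nat_int (q : ℚ) (M : ℕ) (h : q.den ∣ M) : ∃ z : ℤ, (q * M : ℚ) = z := by
  obtain ⟨t, ht⟩ := h
  refine ⟨q.num * t, ?_⟩
  have h1 : (q * (q.den : ℚ)) = (q.num : ℚ) := by
    nth_rewrite 1 [← Rat.num_div_den q]
    rw [div_mul_cancel₀]
    exact_mod_cast q.den_nz
  push_cast [ht]
  rw [← mul_assoc, h1]

/-- **Deepest cut.** Let `V` be a rational affine subspace with direction space `W`,
let `d` be the orthogonal projection onto `W` of some integer vector, and let `x₀ ∈ V`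
be rational. Then the possible right-hand sides `⌊δ⌋ - (c - d)·x₀` (over integer `c`
projecting to `d`) form a discrete subset of `ℝ`; consequently, for any compact convex
`K` meeting `V`, among all CG cuts of `K` with normal projecting to `d` there is a
deepest one on `V`. -/
theorem stmt14 {n : ℕ} (V : AffineSubspace ℝ (E n))
    (hVrat : ∃ (k : ℕ) (a : Fin k → Fin n → ℚ) (b : Fin k → ℚ),
      (V : Set (E n)) = {x | ∀ i, (∑ j, (a i j : ℝ) * x j) = (b i : ℝ)})
    (W : Submodule ℝ (E n)) (hW : W = V.direction)
    (d : E n) (hd : ∃ c₀ : Fin n → ℤ, (W.orthogonalProjectionOnto (iv c₀) : E n) = d)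
    (x₀ : E n) (hx₀ : x₀ ∈ V) (hx₀rat : ∀ i, ∃ q : ℚ, x₀ i = (q : ℝ)) :
    (∀ r ∈ {r : ℝ | ∃ (c : Fin n → ℤ) (k : ℤ),
        (W.orthogonalProjectionOnto (iv c) : E n) = d ∧ r = (k : ℝ) - ⟪iv c - d, x₀⟫_ℝ},
      ∃ ε > (0 : ℝ), ∀ r' ∈ {r : ℝ | ∃ (c : Fin n → ℤ) (k : ℤ),
        (W.orthogonalProjectionOnto (iv c) : E n) = d ∧ r = (k : ℝ) - ⟪iv c - d, x₀⟫_ℝ},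
        r' ≠ r → ε ≤ |r' - r|) ∧
    ∀ K : Set (E n), IsCompact K → Convex ℝ K → K.Nonempty → (K ∩ V).Nonempty →
      ∃ (c' : Fin n → ℤ) (δ' : ℝ),
        (∀ x ∈ K, ⟪iv c', x⟫_ℝ ≤ δ') ∧
        (W.orthogonalProjectionOnto (iv c') : E n) = d ∧
        ∀ (c : Fin n → ℤ) (δ : ℝ), (∀ x ∈ K, ⟪iv c, x⟫_ℝ ≤ δ) →
          (W.orthogonalProjectionOnto (iv c) : E n) = d →
          ∀ x ∈ (V : Set (E n)), ⟪iv c', x⟫_ℝ ≤ (⌊δ'⌋ : ℝ) → ⟪iv c, x⟫_ℝ ≤ (⌊δ⌋ : ℝ) := by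
  classical
  choose q hq using hx₀rat
  set N : ℕ := ∏ i, (q i).den with hN
  have hNpos : 0 < N := Finset.prod_pos (fun i _ => (q i).pos)
  have hNR : (0:ℝ) < N := by exact_mod_cast hNpos
  -- every inner product ⟪iv c, x₀⟫ lies in (1/N)ℤ
  have innerA : ∀ c : Fin n → ℤ, ∃ m : ℤ, ⟪iv c, x₀⟫_ℝ = (m : ℝ) / N := by
    intro c
    have hz : ∀ i : Fin n, ∃ z : ℤ, (q i * N : ℚ) = z := fun i =>
      rat_mul_nat_int _ _ (Finset.dvd_prod_of_mem _ (Finset.mem_univ i))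
    choose z hzz using hz
    refine ⟨∑ i, c i * z i, ?_⟩
    have h1 : ⟪iv c, x₀⟫_ℝ = ∑ i, (c i : ℝ) * x₀ i := by
      simp [PiLp.inner_apply, iv, RCLike.inner_apply]
      exact Finset.sum_congr rfl (fun i _ => mul_comm _ _)
    rw [h1, eq_div_iff (ne_of_gt hNR), Finset.sum_mul]
    push_cast
    refine Finset.sum_congr rfl (fun i _ => ?_)
    have : ((z i : ℝ)) = (q i : ℝ) * N := by exact_mod_cast congrArg (fun r : ℚ => (r : ℝ)) (hzz i).symm
    rw [hq i, this]; ring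
  -- orthogonality key
  have key : ∀ (c : Fin n → ℤ), (W.orthogonalProjectionOnto (iv c) : E n) = d →
      ∀ x ∈ (V : Set (E n)), ⟪iv c, x⟫_ℝ = ⟪iv c - d, x₀⟫_ℝ + ⟪d, x⟫_ℝ := by
    intro c hc x hx
    have hmem : x - x₀ ∈ W := by
      rw [hW]
      exact AffineSubspace.vsub_mem_direction hx hx₀
    have h1 : iv c - (W.orthogonalProjectionOnto (iv c) : E n) ∈ Wᗮ :=
      W.sub_starProjection_mem_orthogonal (iv c)
    rw [hc] at h1
    have h0 : ⟪x - x₀, iv c - d⟫_ℝ = 0 := (Submodule.mem_orthogonal W _).mp h1 _ hmem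
    have h0' : ⟪iv c - d, x - x₀⟫_ℝ = 0 := by rwa [real_inner_comm]
    rw [inner_sub_left, inner_sub_right, inner_sub_right] at h0'
    rw [inner_sub_left]
    linarith
  constructor
  · rintro r ⟨c, k, hc, rfl⟩
    refine ⟨1 / N, by positivity, ?_⟩
    rintro r' ⟨c', k', hc', rfl⟩ hne
    obtain ⟨m, hm⟩ := innerA c
    obtain ⟨m', hm'⟩ := innerA c'
    have e1 : ((k:ℝ) - ⟪iv c - d, x₀⟫_ℝ) = (k:ℝ) - (m:ℝ)/N + ⟪d, x₀⟫_ℝ := by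
      rw [inner_sub_left, hm]; ring
    have e2 : ((k':ℝ) - ⟪iv c' - d, x₀⟫_ℝ) = (k':ℝ) - (m':ℝ)/N + ⟪d, x₀⟫_ℝ := by
      rw [inner_sub_left, hm']; ring
    set j : ℤ := (k' - k) * N - (m' - m) with hj
    have hdiff : ((k':ℝ) - ⟪iv c' - d, x₀⟫_ℝ) - ((k:ℝ) - ⟪iv c - d, x₀⟫_ℝ) = (j:ℝ)/N := by
      rw [e1, e2]; push_cast [hj]; field_simp; ring
    have hjne : j ≠ 0 := by
      intro h0
      apply hne
      have : ((k':ℝ) - ⟪iv c' - d, x₀⟫_ℝ) - ((k:ℝ) - ⟪iv c - d, x₀⟫_ℝ) = 0 := by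
        rw [hdiff, h0]; simp
      linarith
    have h1le : (1:ℝ) ≤ |(j:ℝ)| := by
      have := Int.one_le_abs hjne
      exact_mod_cast this
    rw [hdiff, abs_div, abs_of_pos hNR]
    gcongr
  · intro K hKc hKconv hKne hKV
    obtain ⟨z, hzK, hzV⟩ := hKV
    obtain ⟨c₀, hc₀⟩ := hd
    -- a valid cut exists
    have hcont : ContinuousOn (fun y : E n => ⟪iv c₀, y⟫_ℝ) K :=
      (continuous_const.inner continuous_id).continuousOn
    obtain ⟨y₀, hy₀K, hy₀max⟩ := hKc.exists_isMaxOn hKne hcont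
    set δ₀ : ℝ := ⟪iv c₀, y₀⟫_ℝ with hδ₀
    have hvalid₀ : ∀ x ∈ K, ⟪iv c₀, x⟫_ℝ ≤ δ₀ := fun x hx => hy₀max hx
    -- the integer "level" set
    set P : ℤ → Prop := fun m => ∃ (c : Fin n → ℤ) (δ : ℝ),
      (∀ x ∈ K, ⟪iv c, x⟫_ℝ ≤ δ) ∧ (W.orthogonalProjectionOnto (iv c) : E n) = d ∧
      ((⌊δ⌋ : ℝ) - ⟪iv c - d, x₀⟫_ℝ = (m:ℝ)/N + ⟪d, x₀⟫_ℝ) with hP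
    have hPinh : ∃ m, P m := by
      obtain ⟨m₀, hm₀⟩ := innerA c₀
      refine ⟨⌊δ₀⌋ * N - m₀, c₀, δ₀, hvalid₀, hc₀, ?_⟩
      rw [inner_sub_left, hm₀]
      push_cast
      field_simp
      ring
    have hPbdd : ∃ b, ∀ m, P m → b ≤ m := by
      refine ⟨⌈(N:ℝ) * (⟪d, z⟫_ℝ - 1 - ⟪d, x₀⟫_ℝ)⌉, ?_⟩
      rintro m ⟨c, δ, hval, hc, hm⟩
      have h1 : ⟪iv c, z⟫_ℝ ≤ δ := hval z hzK
      have h2 : ⟪iv c, z⟫_ℝ = ⟪iv c - d, x₀⟫_ℝ + ⟪d, z⟫_ℝ := key c hc z hzV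
      have h3 : δ - 1 < (⌊δ⌋ : ℝ) := by
        have := Int.lt_floor_add_one δ; linarith
      have h4 : (m:ℝ)/N + ⟪d, x₀⟫_ℝ > ⟪d, z⟫_ℝ - 1 := by
        rw [← hm]; linarith
      have h4' : ⟪d, z⟫_ℝ - 1 - ⟪d, x₀⟫_ℝ < (m:ℝ)/N := by linarith
      have h5 : (N:ℝ) * (⟪d, z⟫_ℝ - 1 - ⟪d, x₀⟫_ℝ) ≤ (m:ℝ) := by
        rw [mul_comm]
        exact le_of_lt ((lt_div_iff₀ hNR).mp h4')
      exact Int.ceil_le.mpr h5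
    obtain ⟨m', hPm', hmin⟩ := Int.exists_least_of_bdd hPbdd hPinh
    obtain ⟨c', δ', hval', hc', hm'⟩ := hPm'
    refine ⟨c', δ', hval', hc', ?_⟩
    intro c δ hval hc x hxV hx
    obtain ⟨mA, hmA⟩ := innerA c
    -- level of (c, δ)
    have hPlev : P (⌊δ⌋ * N - mA) := by
      refine ⟨c, δ, hval, hc, ?_⟩
      rw [inner_sub_left, hmA]
      push_cast
      field_simp
      ring
    have hle : m' ≤ ⌊δ⌋ * N - mA := hmin _ hPlev
    have hrle : (⌊δ'⌋ : ℝ) - ⟪iv c' - d, x₀⟫_ℝ ≤ (⌊δ⌋ : ℝ) - ⟪iv c - d, x₀⟫_ℝ := by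
      have h1 : ((⌊δ⌋ * N - mA : ℤ) : ℝ)/N + ⟪d, x₀⟫_ℝ = (⌊δ⌋ : ℝ) - ⟪iv c - d, x₀⟫_ℝ := by
        rw [inner_sub_left, hmA]; push_cast; field_simp; ring
      rw [hm', ← h1]
      have hcast : (m' : ℝ) ≤ ((⌊δ⌋ * N - mA : ℤ) : ℝ) := by exact_mod_cast hle
      gcongr
    have e1 : ⟪iv c', x⟫_ℝ = ⟪iv c' - d, x₀⟫_ℝ + ⟪d, x⟫_ℝ := key c' hc' x hxV
    have e2 : ⟪iv c, x⟫_ℝ = ⟪iv c - d, x₀⟫_ℝ + ⟪d, x⟫_ℝ := key c hc x hxV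
    linarith [hx, hrle]
end
end

section
/- Let P ⊆ R^n be a polytope, v a vertex of P, U ⊆ aff(P) a closed ball of radius r > 0 around v with U contained in a compact convex set K, and W the direction space of aff(P). If c ∈ ℤ^n has orthogonal projection d onto W with ‖d‖ ≥ 1/r, then max_{x∈K} cx ≥ cv + 1; hence the CG cut cx ≤ ⌊max_{x∈K} cx⌋ does not cut off v. -/
open scoped InnerProductSpace

noncomputable section

/-- **Long projections cannot cut off interior vertices.** Let `P` be a polytope,
`v` a vertex of `P`, and `U` the closed ball of radius `r > 0` around `v` inside
`aff P`, with `U ⊆ K` for a compact convex set `K`. If `c ∈ ℤⁿ` has orthogonal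
projection `d` onto the direction space `W` of `aff P` with `‖d‖ ≥ 1/r`, then
`max_{x ∈ K} cx ≥ cv + 1`; hence the CG cut `cx ≤ ⌊max_{x ∈ K} cx⌋` does not
cut off `v`. -/
theorem stmt15 {n : ℕ} (P : Set (E n))
    (hP : ∃ s : Finset (E n), P = convexHull ℝ (s : Set (E n)))
    (v : E n) (hv : v ∈ Set.extremePoints ℝ P)
    (r : ℝ) (hr : 0 < r)
    (K : Set (E n)) (hKcpt : IsCompact K) (hKconv : Convex ℝ K)
    (hUK : Metric.closedBall v r ∩ (affineSpan ℝ P : Set (E n)) ⊆ K)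
    (c : Fin n → ℤ) (d : E n)
    (hd : d = (Submodule.orthogonalProjection (affineSpan ℝ P).direction (iv c) : E n))
    (hdlong : 1 / r ≤ ‖d‖) :
    (∃ x ∈ K, ⟪iv c, v⟫_ℝ + 1 ≤ ⟪iv c, x⟫_ℝ) ∧
    ∀ M : ℝ, IsGreatest {t : ℝ | ∃ x ∈ K, t = ⟪iv c, x⟫_ℝ} M →
      ⟪iv c, v⟫_ℝ ≤ (⌊M⌋ : ℝ) := by
  have hdpos : 0 < ‖d‖ := lt_of_lt_of_le (by positivity) hdlong
  have hvP : v ∈ P := hv.1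
  have hvA : v ∈ affineSpan ℝ P := subset_affineSpan ℝ P hvP
  set W := (affineSpan ℝ P).direction
  have hdW : d ∈ W := by rw [hd]; exact (Submodule.orthogonalProjection W (iv c)).2
  set x : E n := (r / ‖d‖) • d + v with hx
  have hxA : x ∈ affineSpan ℝ P := by
    have : ((r / ‖d‖) • d) +ᵥ v ∈ affineSpan ℝ P :=
      AffineSubspace.vadd_mem_of_mem_direction (Submodule.smul_mem _ _ hdW) hvA
    simpa [hx] using this
  have hxB : x ∈ Metric.closedBall v r := by
    have : dist x v = r := by
      rw [dist_eq_norm]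
      have : x - v = (r / ‖d‖) • d := by simp [hx]
      rw [this, norm_smul]
      rw [Real.norm_eq_abs, abs_of_nonneg (by positivity)]
      field_simp
    rw [Metric.mem_closedBall, this]
  have hxK : x ∈ K := hUK ⟨hxB, hxA⟩
  have hinner : ⟪iv c, d⟫_ℝ = ‖d‖ ^ 2 := by
    have horth : iv c - d ∈ Wᗮ := by
      rw [hd]; exact Submodule.sub_starProjection_mem_orthogonal (K := W) (iv c)
    have h0 : ⟪iv c - d, d⟫_ℝ = 0 := by
      rw [real_inner_comm]; exact horth d hdW
    have := inner_sub_left (𝕜 := ℝ) (iv c) d d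
    rw [h0] at this
    rw [← real_inner_self_eq_norm_sq]
    linarith [this]
  have hkey : ⟪iv c, v⟫_ℝ + 1 ≤ ⟪iv c, x⟫_ℝ := by
    have : ⟪iv c, x⟫_ℝ = (r / ‖d‖) * ⟪iv c, d⟫_ℝ + ⟪iv c, v⟫_ℝ := by
      rw [hx, inner_add_right, real_inner_smul_right]
    rw [this, hinner]
    have h1 : (r / ‖d‖) * ‖d‖ ^ 2 = r * ‖d‖ := by
      field_simp
    rw [h1]
    have : 1 ≤ r * ‖d‖ := by
      have := mul_le_mul_of_nonneg_left hdlong hr.le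
      rwa [mul_one_div, div_self hr.ne'] at this
    linarith
  refine ⟨⟨x, hxK, hkey⟩, ?_⟩
  intro M hM
  have hxM : ⟪iv c, x⟫_ℝ ≤ M := hM.2 ⟨x, hxK, rfl⟩
  have : ⟪iv c, v⟫_ℝ ≤ M - 1 := by linarith
  have := Int.sub_one_lt_floor M
  linarith
end
end

section
/- Let K ⊆ R^n be a compact convex set whose affine hull aff(K) is not a rational affine subspace (i.e., aff(K) contains no dense subset of rational points of appropriate dimension / cannot be defined by rational equations). Then K' is contained in a rational affine subspace properly contained in aff(K); in particular dim K' < dim K. -/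
open scoped InnerProductSpace

noncomputable section

lemma inner_iv {n : ℕ} (c : Fin n → ℤ) (x : E n) : ⟪iv c, x⟫_ℝ = ∑ i, (c i : ℝ) * x i := by
  simp [iv, PiLp.inner_apply, RCLike.inner_apply, mul_comm]

lemma inner_real {n : ℕ} (v x : E n) : ⟪v, x⟫_ℝ = ∑ i, v i * x i := by
  simp [PiLp.inner_apply, RCLike.inner_apply, mul_comm]

lemma coord_le {n} (x : E n) (i) : |x i| ≤ ‖x‖ := by
  rw [EuclideanSpace.norm_eq x, show |x i| = Real.sqrt (x i ^2) by rw [Real.sqrt_sq_eq_abs]]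
  apply Real.sqrt_le_sqrt
  calc x i ^ 2 = ‖x i‖ ^2 := by rw [Real.norm_eq_abs, sq_abs]
  _ ≤ _ := Finset.single_le_sum (f := fun j => ‖x j‖ ^ 2) (fun j _ => sq_nonneg _) (Finset.mem_univ i)

lemma dirichlet_aux {n : ℕ} (u : Fin n → ℝ) (N : ℕ) (hN : 0 < N) (a b : ℕ) (h : b < a)
    (hfe : ∀ i, ⌊(N:ℝ) * Int.fract (a * u i)⌋ = ⌊(N:ℝ) * Int.fract (b * u i)⌋) :
    ∃ (q : ℕ) (p : Fin n → ℤ), 0 < q ∧ ∀ i, |q * u i - p i| < 1 / N := by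
  refine ⟨a - b, fun i => ⌊(a:ℝ) * u i⌋ - ⌊(b:ℝ) * u i⌋, by omega, fun i => ?_⟩
  have hNpos : (0:ℝ) < N := by positivity
  have habs := Int.abs_sub_lt_one_of_floor_eq_floor (hfe i)
  have key : |Int.fract ((a:ℝ) * u i) - Int.fract ((b:ℝ) * u i)| < 1 / N := by
    rw [lt_div_iff₀ hNpos, mul_comm, ← abs_of_pos hNpos, ← abs_mul, mul_sub]
    exact habs
  have he : (((a - b : ℕ)):ℝ) * u i - ((⌊(a:ℝ) * u i⌋ - ⌊(b:ℝ) * u i⌋ : ℤ) : ℝ)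
      = Int.fract ((a:ℝ) * u i) - Int.fract ((b:ℝ) * u i) := by
    rw [Int.fract, Int.fract]
    push_cast [Nat.cast_sub h.le]
    ring
  rw [show ((⌊(a:ℝ) * u i⌋ - ⌊(b:ℝ) * u i⌋ : ℤ) : ℝ)
      = ((⌊(a:ℝ) * u i⌋ : ℝ) - (⌊(b:ℝ) * u i⌋ : ℝ)) by push_cast; ring] at he ⊢
  rw [he]; exact key

lemma dirichlet_s17 {n : ℕ} (u : Fin n → ℝ) (N : ℕ) (hN : 0 < N) :
    ∃ (q : ℕ) (p : Fin n → ℤ), 0 < q ∧ ∀ i, |q * u i - p i| < 1 / N := by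
  have hfr : ∀ (j : ℕ) (i : Fin n), (0:ℤ) ≤ ⌊(N:ℝ) * Int.fract (j * u i)⌋ ∧
      ⌊(N:ℝ) * Int.fract (j * u i)⌋ < N := by
    intro j i
    refine ⟨Int.floor_nonneg.mpr (mul_nonneg (Nat.cast_nonneg N) (Int.fract_nonneg _)), ?_⟩
    rw [Int.floor_lt]
    push_cast
    calc (N:ℝ) * Int.fract (j * u i) < N * 1 :=
          mul_lt_mul_of_pos_left (Int.fract_lt_one _) (by positivity)
    _ = N := mul_one _
  set f : Fin (N^n + 1) → (Fin n → Fin N) := fun j i =>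
    ⟨(⌊(N:ℝ) * Int.fract (j * u i)⌋).toNat, by have := hfr j i; omega⟩ with hf
  obtain ⟨a, b, hab, hfab⟩ := Fintype.exists_ne_map_eq_of_card_lt f (by simp)
  have hfe : ∀ i, ⌊(N:ℝ) * Int.fract ((a:ℕ) * u i)⌋ = ⌊(N:ℝ) * Int.fract ((b:ℕ) * u i)⌋ := by
    intro i
    have h4 := congrArg (Fin.val) (congrFun hfab i)
    simp only [f] at h4
    have h2 := (hfr a i).1
    have h3 := (hfr b i).1
    omega
  rcases lt_or_gt_of_ne (fun h : (a:ℕ) = (b:ℕ) => hab (Fin.ext h)) with h | h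
  · exact dirichlet_aux u N hN b a h (fun i => (hfe i).symm)
  · exact dirichlet_aux u N hN a b h hfe

lemma cg_subset {n : ℕ} (K : Set (E n)) (hKcpt : IsCompact K) (hKconv : Convex ℝ K) :
    cg K ⊆ K := by
  intro x hx
  by_contra hxK
  obtain ⟨f, u, hfu, hux⟩ := geometric_hahn_banach_closed_point hKconv hKcpt.isClosed hxK
  set v : E n := (InnerProductSpace.toDual ℝ (E n)).symm f with hv
  have hvf : ∀ y, ⟪v, y⟫_ℝ = f y := fun y => by
    rw [hv, InnerProductSpace.toDual_symm_apply]
  obtain ⟨B, hB⟩ := hKcpt.isBounded.exists_norm_le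
  set R : ℝ := max B ‖x‖ with hR
  have hRx : ‖x‖ ≤ R := le_max_right _ _
  have hRK : ∀ y ∈ K, ‖y‖ ≤ R := fun y hy => le_trans (hB y hy) (le_max_left _ _)
  have hR0 : 0 ≤ R := le_trans (norm_nonneg x) hRx
  set g : ℝ := f x - u with hg
  have hg0 : 0 < g := by simp [hg]; linarith
  obtain ⟨D, hD⟩ := exists_nat_gt ((n * R + 1) / g)
  have hDg : n * R + 1 < D * g := by
    rw [div_lt_iff₀ hg0] at hD; linarith
  set c : Fin n → ℤ := fun i => round ((D:ℝ) * v i) with hc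
  have key : ∀ y : E n, ‖y‖ ≤ R → |⟪iv c, y⟫_ℝ - D * ⟪v, y⟫_ℝ| ≤ n * R / 2 := by
    intro y hy
    have : ⟪iv c, y⟫_ℝ - D * ⟪v, y⟫_ℝ = ∑ i, ((c i : ℝ) - D * v i) * y i := by
      rw [inner_iv, inner_real, Finset.mul_sum, ← Finset.sum_sub_distrib]
      congr 1; ext i; ring
    rw [this]
    calc |∑ i, ((c i : ℝ) - D * v i) * y i| ≤ ∑ i, |((c i : ℝ) - D * v i) * y i| :=
          Finset.abs_sum_le_sum_abs _ _
    _ ≤ ∑ _i : Fin n, (1/2) * R := by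
        apply Finset.sum_le_sum
        intro i _
        rw [abs_mul]
        apply mul_le_mul (by rw [abs_sub_comm]; simpa [hc] using abs_sub_round ((D:ℝ) * v i))
          (le_trans (coord_le y i) hy) (abs_nonneg _) (by norm_num)
    _ = n * R / 2 := by simp [Finset.sum_const]; ring
  have hvalid : ∀ y ∈ K, ⟪iv c, y⟫_ℝ ≤ D * u + n * R / 2 := by
    intro y hy
    have h1 := key y (hRK y hy)
    have h2 : ⟪v, y⟫_ℝ ≤ u := le_of_lt (by rw [hvf]; exact hfu y hy)
    have h3 : (D:ℝ) * ⟪v, y⟫_ℝ ≤ D * u := mul_le_mul_of_nonneg_left h2 (Nat.cast_nonneg D)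
    have := abs_le.mp h1
    linarith [this.2]
  have hcut := hx c (D * u + n * R / 2) hvalid
  have hfloor : ((⌊(D:ℝ) * u + n * R / 2⌋ : ℤ) : ℝ) ≤ D * u + n * R / 2 := Int.floor_le _
  have hxval := key x hRx
  have h4 : (D:ℝ) * ⟪v, x⟫_ℝ = D * u + D * g := by rw [hvf]; simp [hg]; ring
  have := abs_le.mp hxval
  linarith [this.1]

/-- The set of integer vectors on which `cg K` has a constant integer inner product value. -/
def connSet {n : ℕ} (K : Set (E n)) : Set (E n) :=
  {v : E n | (∃ c : Fin n → ℤ, v = iv c) ∧ ∃ m : ℤ, ∀ x ∈ cg K, ⟪v, x⟫_ℝ = (m:ℝ)}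

lemma main_span {n : ℕ} (K : Set (E n)) (hKcpt : IsCompact K) (x0 : E n) (hx0 : x0 ∈ K)
    (xs : E n) (hxs : xs ∈ cg K) :
    ((affineSpan ℝ K).direction)ᗮ ≤ Submodule.span ℝ (connSet K) := by
  intro u hu
  set W := Submodule.span ℝ (connSet K) with hW
  have hclosed : IsClosed (W : Set (E n)) := Submodule.closed_of_finiteDimensional W
  have hcl : u ∈ closure (W : Set (E n)) → u ∈ W := fun h => by
    rwa [hclosed.closure_eq] at h
  apply hcl
  rw [Metric.mem_closure_iff]
  intro ε hε
  obtain ⟨B, hB⟩ := hKcpt.isBounded.exists_norm_le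
  have hB0 : 0 ≤ B := le_trans (norm_nonneg x0) (hB x0 hx0)
  obtain ⟨N, hN⟩ := exists_nat_gt (max (2 * n * B) (Real.sqrt n / ε))
  have hN1 : 2 * n * B < N := lt_of_le_of_lt (le_max_left _ _) hN
  have hN2 : Real.sqrt n / ε < N := lt_of_le_of_lt (le_max_right _ _) hN
  have hNpos : 0 < N := by
    by_contra h
    push_neg at h
    interval_cases N
    · simp at hN1 hN2
      have : (0:ℝ) ≤ Real.sqrt n / ε := by positivity
      nlinarith [hN1, hN2]
  have hNR : (0:ℝ) < N := by exact_mod_cast hNpos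
  obtain ⟨q, p, hq, hqp⟩ := dirichlet_s17 u N hNpos
  have hqR : (0:ℝ) < q := by exact_mod_cast hq
  have hconst : ∀ y ∈ K, ⟪u, y⟫_ℝ = ⟪u, x0⟫_ℝ := by
    intro y hy
    have hmem : y -ᵥ x0 ∈ (affineSpan ℝ K).direction :=
      AffineSubspace.vsub_mem_direction (subset_affineSpan ℝ K hy) (subset_affineSpan ℝ K hx0)
    have h0 : ⟪u, y - x0⟫_ℝ = 0 := by
      rw [real_inner_comm]
      exact (Submodule.mem_orthogonal _ u).mp hu _ (by simpa using hmem)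
    rw [inner_sub_right] at h0
    linarith
  set α : ℝ := ⟪u, x0⟫_ℝ with hα
  set ε₀ : ℝ := n * B / N with hε₀
  have hε₀0 : 0 ≤ ε₀ := by positivity
  have hε₀half : ε₀ < 1/2 := by
    rw [hε₀, div_lt_iff₀ hNR]
    nlinarith
  have hest : ∀ y ∈ K, |⟪iv p, y⟫_ℝ - q * α| ≤ ε₀ := by
    intro y hy
    have hdiff : ⟪iv p, y⟫_ℝ - q * α = ∑ i, ((p i : ℝ) - q * u i) * y i := by
      rw [← hconst y hy, inner_iv, inner_real, Finset.mul_sum, ← Finset.sum_sub_distrib]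
      congr 1; ext i; ring
    rw [hdiff]
    calc |∑ i, ((p i : ℝ) - q * u i) * y i| ≤ ∑ i, |((p i : ℝ) - q * u i) * y i| :=
          Finset.abs_sum_le_sum_abs _ _
    _ ≤ ∑ _i : Fin n, (1/N) * B := by
        apply Finset.sum_le_sum
        intro i _
        rw [abs_mul]
        apply mul_le_mul _ (le_trans (coord_le y i) (hB y hy)) (abs_nonneg _) (by positivity)
        rw [abs_sub_comm]
        exact (hqp i).le
    _ = ε₀ := by simp [hε₀, Finset.sum_const]; ring
  have hcut1 : ∀ x ∈ cg K, ⟪iv p, x⟫_ℝ ≤ ((⌊q * α + ε₀⌋ : ℤ) : ℝ) := by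
    intro x hxcg
    exact hxcg p (q * α + ε₀) (fun y hy => by have := abs_le.mp (hest y hy); linarith [this.2])
  have hcut2 : ∀ x ∈ cg K, -⟪iv p, x⟫_ℝ ≤ ((⌊ε₀ - q * α⌋ : ℤ) : ℝ) := by
    intro x hxcg
    have hneg : ∀ y : E n, ⟪iv (-p), y⟫_ℝ = -⟪iv p, y⟫_ℝ := by
      intro y
      have : iv (-p) = -(iv p) := by ext i; simp [iv]
      rw [this, inner_neg_left]
    have := hxcg (-p) (ε₀ - q * α) (fun y hy => by
      rw [hneg y]
      have := abs_le.mp (hest y hy); linarith [this.1])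
    rwa [hneg] at this
  have hfl : ⌊q * α + ε₀⌋ + ⌊ε₀ - q * α⌋ = 0 := by
    have hle : ⌊q * α + ε₀⌋ + ⌊ε₀ - q * α⌋ ≤ ⌊(q * α + ε₀) + (ε₀ - q * α)⌋ :=
      Int.le_floor.mpr (by push_cast; gcongr <;> exact Int.floor_le _)
    have h2 : ⌊(q * α + ε₀) + (ε₀ - q * α)⌋ = 0 := by
      rw [show (q * α + ε₀) + (ε₀ - q * α) = 2 * ε₀ by ring]
      rw [Int.floor_eq_zero_iff]
      exact Set.mem_Ico.mpr ⟨by linarith, by linarith⟩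
    have hge : (0:ℝ) ≤ ((⌊q * α + ε₀⌋ : ℤ):ℝ) + ((⌊ε₀ - q * α⌋ : ℤ):ℝ) := by
      have h1 := hcut1 xs hxs
      have h2 := hcut2 xs hxs
      linarith
    have hge' : (0:ℤ) ≤ ⌊q * α + ε₀⌋ + ⌊ε₀ - q * α⌋ := by exact_mod_cast hge
    omega
  have hmem : iv p ∈ connSet K := by
    refine ⟨⟨p, rfl⟩, ⌊q * α + ε₀⌋, fun x hxcg => ?_⟩
    have h1 := hcut1 x hxcg
    have h2 := hcut2 x hxcg
    have h3 : ((⌊ε₀ - q * α⌋ : ℤ) : ℝ) = -((⌊q * α + ε₀⌋ : ℤ) : ℝ) := by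
      have : ⌊ε₀ - q * α⌋ = -⌊q * α + ε₀⌋ := by omega
      rw [this]; push_cast; ring
    rw [h3] at h2
    linarith
  refine ⟨(q : ℝ)⁻¹ • iv p, Submodule.smul_mem W _ (Submodule.subset_span hmem), ?_⟩
  rw [dist_eq_norm]
  have hcoord : ∀ i, ‖(u - (q:ℝ)⁻¹ • iv p) i‖ ≤ 1 / N := by
    intro i
    have : (u - (q:ℝ)⁻¹ • iv p) i = (q:ℝ)⁻¹ * (q * u i - p i) := by
      simp [iv]
      field_simp
    rw [this, Real.norm_eq_abs, abs_mul, abs_of_pos (by positivity : (0:ℝ) < (q:ℝ)⁻¹)]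
    calc (q:ℝ)⁻¹ * |q * u i - p i| ≤ 1 * (1/N) := by
          apply mul_le_mul _ (hqp i).le (abs_nonneg _) (by norm_num)
          rw [inv_le_one_iff₀]
          right
          exact_mod_cast hq
    _ = 1/N := one_mul _
  calc ‖u - (q:ℝ)⁻¹ • iv p‖ ≤ Real.sqrt (n * ((1:ℝ)/N)^2) := by
        rw [EuclideanSpace.norm_eq]
        apply Real.sqrt_le_sqrt
        calc ∑ i, ‖(u - (q:ℝ)⁻¹ • iv p) i‖^2 ≤ ∑ _i : Fin n, ((1:ℝ)/N)^2 := by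
              apply Finset.sum_le_sum
              intro i _
              exact pow_le_pow_left₀ (norm_nonneg _) (hcoord i) 2
        _ = n * ((1:ℝ)/N)^2 := by
              rw [Finset.sum_const, Finset.card_univ, Fintype.card_fin, nsmul_eq_mul]
  _ = Real.sqrt n * (1/N) := by
        rw [Real.sqrt_mul (Nat.cast_nonneg n), Real.sqrt_sq (by positivity)]
  _ < ε := by
        rw [div_lt_iff₀ hε] at hN2
        rw [mul_one_div, div_lt_iff₀ hNR]
        linarith [hN2]

lemma mem_orthogonal_span {n : ℕ} {s : Set (E n)} {d : E n}
    (h : ∀ v ∈ s, ⟪v, d⟫_ℝ = 0) : d ∈ (Submodule.span ℝ s)ᗮ := by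
  rw [Submodule.mem_orthogonal]
  intro w hw
  induction hw using Submodule.span_induction with
  | mem v hv => exact h v hv
  | zero => exact inner_zero_left d
  | add a b _ _ ha hb => rw [inner_add_left, ha, hb]; ring
  | smul r a _ ha => rw [real_inner_smul_left, ha]; ring

/-- If the affine hull of a compact convex set `K` is not a rational affine subspace
(not definable by finitely many linear equations with rational coefficients), then the
CG closure of `K` is contained in a rational affine subspace properly contained in
`aff K`; in particular, if `K'` is nonempty, its dimension is less than that of `K`. -/
theorem stmt17 {n : ℕ} (K : Set (E n)) (hKcpt : IsCompact K) (hKconv : Convex ℝ K)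
    (hirr : ¬ ∃ (k : ℕ) (a : Fin k → Fin n → ℚ) (b : Fin k → ℚ),
      (affineSpan ℝ K : Set (E n)) = {x | ∀ i, (∑ j, (a i j : ℝ) * x j) = (b i : ℝ)}) :
    ∃ V : Set (E n),
      (∃ (k : ℕ) (a : Fin k → Fin n → ℚ) (b : Fin k → ℚ),
        V = {x | ∀ i, (∑ j, (a i j : ℝ) * x j) = (b i : ℝ)}) ∧
      cg K ⊆ V ∧ V ⊆ (affineSpan ℝ K : Set (E n)) ∧ V ≠ (affineSpan ℝ K : Set (E n)) ∧
      ((cg K).Nonempty →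
        Module.finrank ℝ (affineSpan ℝ (cg K)).direction
          < Module.finrank ℝ (affineSpan ℝ K).direction) := by
  classical
  -- K is nonempty
  have hKne : K.Nonempty := by
    by_contra h
    rw [Set.not_nonempty_iff_eq_empty] at h
    subst h
    apply hirr
    refine ⟨1, fun _ _ => 0, fun _ => 1, ?_⟩
    rw [AffineSubspace.span_empty, AffineSubspace.bot_coe]
    ext x
    simp
  obtain ⟨x0, hx0⟩ := hKne
  have hx0span : x0 ∈ affineSpan ℝ K := subset_affineSpan ℝ K hx0
  by_cases hne : (cg K).Nonempty
  · -- main case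
    obtain ⟨xs, hxs⟩ := hne
    have hcgK : cg K ⊆ K := cg_subset K hKcpt hKconv
    have hxsK : xs ∈ K := hcgK hxs
    have hxsspan : xs ∈ affineSpan ℝ K := subset_affineSpan ℝ K hxsK
    set L := (affineSpan ℝ K).direction with hL
    have hspan : Lᗮ ≤ Submodule.span ℝ (connSet K) := main_span K hKcpt x0 hx0 xs hxs
    -- find a finite subset T of connSet K spanning at least Lᗮ
    obtain ⟨F, hF⟩ := IsNoetherian.noetherian Lᗮ
    have hFmem : ∀ v : F, (v : E n) ∈ Submodule.span ℝ (connSet K) := fun v =>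
      hspan (hF ▸ Submodule.subset_span v.2)
    have hfin : ∀ v : F, ∃ t : Finset (E n),
        ↑t ⊆ connSet K ∧ (v : E n) ∈ Submodule.span ℝ (t : Set (E n)) := fun v =>
      Submodule.mem_span_finite_of_mem_span (hFmem v)
    choose t ht1 ht2 using hfin
    set T : Finset (E n) := F.attach.biUnion t with hT
    have hTconn : (T : Set (E n)) ⊆ connSet K := by
      intro v hv
      simp only [hT, Finset.coe_biUnion, Set.mem_iUnion, Finset.mem_coe] at hv
      obtain ⟨w, _, hw⟩ := hv
      exact ht1 w hw
    have hTspan : Lᗮ ≤ Submodule.span ℝ (T : Set (E n)) := by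
      rw [← hF]
      rw [Submodule.span_le]
      intro v hv
      have hmem : (⟨v, hv⟩ : F) ∈ F.attach := Finset.mem_attach _ _
      have hsub : (t ⟨v, hv⟩ : Set (E n)) ⊆ (T : Set (E n)) := by
        intro w hw
        simp only [hT, Finset.coe_biUnion, Set.mem_iUnion, Finset.mem_coe]
        exact ⟨⟨v, hv⟩, Finset.mem_attach _ _, hw⟩
      exact Submodule.span_mono hsub (ht2 ⟨v, hv⟩)
    -- extract data
    have hc' : ∀ v : T, ∃ c : Fin n → ℤ, (v : E n) = iv c := fun v => (hTconn v.2).1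
    have hm' : ∀ v : T, ∃ m : ℤ, ∀ x ∈ cg K, ⟪(v : E n), x⟫_ℝ = (m : ℝ) := fun v =>
      (hTconn v.2).2
    choose c hc using hc'
    choose m hm using hm'
    set k : ℕ := Fintype.card T with hk
    set e : Fin k ≃ T := (Fintype.equivFin T).symm with he
    set a : Fin k → Fin n → ℚ := fun i j => ((c (e i) j : ℤ) : ℚ) with ha
    set b : Fin k → ℚ := fun i => ((m (e i) : ℤ) : ℚ) with hb
    set V : Set (E n) := {x | ∀ i, (∑ j, (a i j : ℝ) * x j) = (b i : ℝ)} with hV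
    -- membership characterization
    have hVmem : ∀ x : E n, x ∈ V ↔ ∀ v : T, ⟪(v : E n), x⟫_ℝ = (m v : ℝ) := by
      intro x
      have hiv : ∀ i : Fin k, (∑ j, (a i j : ℝ) * x j) = ⟪((e i : T) : E n), x⟫_ℝ := by
        intro i
        rw [hc (e i), inner_iv]
        apply Finset.sum_congr rfl
        intro j _
        norm_num [ha]
      have hbv : ∀ i : Fin k, ((b i : ℚ) : ℝ) = ((m (e i) : ℤ) : ℝ) := by
        intro i; simp [hb]
      constructor
      · intro hx v
        have := hx (e.symm v)
        rw [hiv, hbv, Equiv.apply_symm_apply] at this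
        exact this
      · intro hx i
        rw [hiv, hbv]
        exact hx (e i)
    -- cg K ⊆ V
    have hsub : cg K ⊆ V := by
      intro x hx
      rw [hVmem]
      intro v
      exact hm v x hx
    -- orthogonality helper
    have horth : ∀ x ∈ V, x - xs ∈ (Submodule.span ℝ (T : Set (E n)))ᗮ := by
      intro x hx
      apply mem_orthogonal_span
      intro v hv
      have h1 := (hVmem x).mp hx ⟨v, hv⟩
      have h2 := hm ⟨v, hv⟩ xs hxs
      rw [inner_sub_right, h1, h2]
      ring
    -- V ⊆ affineSpan K
    have hVsub : V ⊆ (affineSpan ℝ K : Set (E n)) := by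
      intro x hx
      have h1 : x - xs ∈ (Submodule.span ℝ (T : Set (E n)))ᗮ := horth x hx
      have h2 : (Submodule.span ℝ (T : Set (E n)))ᗮ ≤ Lᗮᗮ := Submodule.orthogonal_le hTspan
      have h3 : x - xs ∈ L := by
        rw [← Submodule.orthogonal_orthogonal L]
        exact h2 h1
      have := AffineSubspace.vadd_mem_of_mem_direction h3 hxsspan
      simpa using this
    -- V ≠ affineSpan K
    have hVne : V ≠ (affineSpan ℝ K : Set (E n)) := by
      intro h
      exact hirr ⟨k, a, b, by rw [← h, hV]⟩
    refine ⟨V, ⟨k, a, b, rfl⟩, hsub, hVsub, hVne, fun _ => ?_⟩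
    -- dimension drop
    by_contra hd
    push_neg at hd
    have hL'L : (affineSpan ℝ (cg K)).direction ≤ L :=
      AffineSubspace.direction_le (affineSpan_mono ℝ hcgK)
    have hEq : (affineSpan ℝ (cg K)).direction = L :=
      Submodule.eq_of_le_of_finrank_le hL'L hd
    -- L ≤ (span T)ᗮ
    have hLperp : L ≤ (Submodule.span ℝ (T : Set (E n)))ᗮ := by
      rw [← hEq, direction_affineSpan, vectorSpan_def]
      rw [Submodule.span_le]
      rintro d hd'
      obtain ⟨y, hy, z, hz, rfl⟩ := hd'
      apply mem_orthogonal_span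
      intro v hv
      have h1 := hm ⟨v, hv⟩ y hy
      have h2 := hm ⟨v, hv⟩ z hz
      show ⟪v, y - z⟫_ℝ = 0
      rw [inner_sub_right, h1, h2]
      ring
    -- affineSpan K ⊆ V
    have hKV : (affineSpan ℝ K : Set (E n)) ⊆ V := by
      intro x hx
      rw [hVmem]
      intro v
      have h3 : x - xs ∈ L := by
        have := AffineSubspace.vsub_mem_direction hx hxsspan
        simpa using this
      have h4 : x - xs ∈ (Submodule.span ℝ (T : Set (E n)))ᗮ := hLperp h3
      have h5 : ⟪(v : E n), x - xs⟫_ℝ = 0 :=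
        (Submodule.mem_orthogonal _ _).mp h4 _ (Submodule.subset_span v.2)
      rw [inner_sub_right] at h5
      have h6 := hm v xs hxs
      linarith
    exact hVne (le_antisymm hVsub hKV)
  · -- cg K is empty
    rw [Set.not_nonempty_iff_eq_empty] at hne
    refine ⟨∅, ⟨1, fun _ _ => 0, fun _ => 1, ?_⟩, by simp [hne], Set.empty_subset _, ?_, ?_⟩
    · ext x
      simp
    · intro h
      have : x0 ∈ (∅ : Set (E n)) := h ▸ hx0span
      exact this
    · intro h
      rw [hne] at h
      exact absurd h Set.not_nonempty_empty
end
end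

section
/- Let K ⊆ R^n be a compact convex set with supporting inequality πx ≤ π₀ where π is irrational in the sense that no nonzero integer vector is parallel to π. Then for every ε > 0 there exists c ∈ ℤ^n with c ≠ 0 such that the unit vectors satisfy ‖c/‖c‖ − π/‖π‖‖ < ε, and cx ≤ max_{x∈K} cx is a valid inequality whose maximizers over K lie within any prescribed neighbourhood of the π-face of K (for ε small enough). -/
open scoped InnerProductSpace

noncomputable section

open Filter Topology

theorem normdir {n : ℕ} (u v : E n) (hu : u ≠ 0) (hv : v ≠ 0) :
    ‖‖u‖⁻¹ • u - ‖v‖⁻¹ • v‖ ≤ 2 * ‖u - v‖ / ‖u‖ := by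
  have ha : (0:ℝ) < ‖u‖ := norm_pos_iff.mpr hu
  have hb : (0:ℝ) < ‖v‖ := norm_pos_iff.mpr hv
  have key : ‖u‖⁻¹ • u - ‖v‖⁻¹ • v = ‖u‖⁻¹ • (u - v) + (‖u‖⁻¹ - ‖v‖⁻¹) • v := by
    simp [smul_sub, sub_smul]
  have h2 : |‖u‖⁻¹ - ‖v‖⁻¹| * ‖v‖ ≤ ‖u‖⁻¹ * ‖u - v‖ := by
    have e1 : ‖u‖⁻¹ - ‖v‖⁻¹ = (‖v‖ - ‖u‖) / (‖u‖ * ‖v‖) := by field_simp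
    rw [e1, abs_div, abs_of_pos (mul_pos ha hb)]
    have e2 : |‖v‖ - ‖u‖| / (‖u‖ * ‖v‖) * ‖v‖ = |‖v‖ - ‖u‖| / ‖u‖ := by
      field_simp
    rw [e2]
    have h1 : |‖v‖ - ‖u‖| ≤ ‖u - v‖ := by
      rw [abs_sub_comm]; exact abs_norm_sub_norm_le u v
    rw [div_eq_inv_mul]
    exact mul_le_mul_of_nonneg_left h1 (by positivity)
  calc ‖‖u‖⁻¹ • u - ‖v‖⁻¹ • v‖
      ≤ ‖‖u‖⁻¹ • (u - v)‖ + ‖(‖u‖⁻¹ - ‖v‖⁻¹) • v‖ := key ▸ norm_add_le _ _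
    _ = ‖u‖⁻¹ * ‖u - v‖ + |‖u‖⁻¹ - ‖v‖⁻¹| * ‖v‖ := by
        rw [norm_smul, norm_smul, Real.norm_eq_abs, Real.norm_eq_abs,
          abs_of_pos (inv_pos.mpr ha)]
    _ ≤ ‖u‖⁻¹ * ‖u - v‖ + ‖u‖⁻¹ * ‖u - v‖ := by linarith
    _ = 2 * ‖u - v‖ / ‖u‖ := by field_simp; ring


theorem approx_s18 {n : ℕ} (π : E n) (hπ : π ≠ 0) (ε : ℝ) (hε : 0 < ε) :
    ∃ c : Fin n → ℤ, iv c ≠ 0 ∧ ‖‖iv c‖⁻¹ • iv c - ‖π‖⁻¹ • π‖ < ε := by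
  rcases Nat.eq_zero_or_pos n with hn | hn
  · subst hn; exact absurd (Subsingleton.elim π 0) hπ
  set s := Real.sqrt n with hs
  have hs1 : (1:ℝ) ≤ s := by
    rw [hs, show (1:ℝ) = Real.sqrt 1 by simp]
    exact Real.sqrt_le_sqrt (by exact_mod_cast hn)
  have hs0 : 0 < s := lt_of_lt_of_le one_pos hs1
  have hπ0 : (0:ℝ) < ‖π‖ := norm_pos_iff.mpr hπ
  obtain ⟨m, hm⟩ := exists_nat_gt ((s/2 + 2*s/ε) / ‖π‖)
  have hmπ : s/2 + 2*s/ε < (m:ℝ) * ‖π‖ := by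
    rw [div_lt_iff₀ hπ0] at hm; linarith
  set c : Fin n → ℤ := fun i => round ((m:ℝ) * π i) with hc
  set u : E n := iv c with hudef
  set v : E n := (m:ℝ) • π with hvdef
  have hvnorm : ‖v‖ = (m:ℝ) * ‖π‖ := by
    rw [hvdef, norm_smul, Real.norm_natCast]
  have hd : ‖u - v‖ ≤ s / 2 := by
    have h1 : ‖u - v‖ = Real.sqrt (∑ i, ‖(u - v) i‖ ^ 2) := by
      rw [EuclideanSpace.norm_eq]
    rw [h1]
    have h2 : (∑ i, ‖(u - v) i‖ ^ 2) ≤ (s/2)^2 := by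
      have hb : ∀ i : Fin n, ‖(u - v) i‖ ^ 2 ≤ (1/2)^2 := by
        intro i
        have : (u - v) i = (round ((m:ℝ) * π i) : ℝ) - (m:ℝ) * π i := by
          simp [hudef, hvdef, iv, hc]
        rw [this, Real.norm_eq_abs, abs_sub_comm]
        have h3 := abs_sub_round ((m:ℝ) * π i)
        have h4 : (0:ℝ) ≤ |(m:ℝ) * π i - (round ((m:ℝ) * π i) : ℝ)| := abs_nonneg _
        nlinarith
      calc (∑ i, ‖(u - v) i‖ ^ 2) ≤ ∑ _i : Fin n, ((1:ℝ)/2)^2 :=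
            Finset.sum_le_sum fun i _ => hb i
        _ = n * (1/2)^2 := by simp [Finset.sum_const]
        _ = (s/2)^2 := by
            rw [div_pow, div_pow, hs, Real.sq_sqrt (by positivity : (0:ℝ) ≤ (n:ℝ))]
            ring
    calc Real.sqrt (∑ i, ‖(u - v) i‖ ^ 2) ≤ Real.sqrt ((s/2)^2) := Real.sqrt_le_sqrt h2
      _ = s/2 := Real.sqrt_sq (by positivity)
  have hu_lb : (m:ℝ) * ‖π‖ - s/2 ≤ ‖u‖ := by
    have h5 : ‖v‖ - ‖u‖ ≤ ‖v - u‖ := norm_sub_norm_le v u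
    rw [norm_sub_rev] at h5
    rw [hvnorm] at h5
    linarith
  have hu_big : 2*s/ε < ‖u‖ := by linarith
  have hu_pos : (0:ℝ) < ‖u‖ := lt_trans (by positivity) hu_big
  have hu0 : u ≠ 0 := norm_pos_iff.mp hu_pos
  have hm0 : (0:ℝ) < (m:ℝ) := by nlinarith [div_pos (by positivity : (0:ℝ) < 2*s) hε]
  have hv0 : v ≠ 0 := smul_ne_zero (ne_of_gt hm0) hπ
  have hdir : ‖π‖⁻¹ • π = ‖v‖⁻¹ • v := by
    rw [hvnorm, hvdef, smul_smul]
    congr 1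
    field_simp
  refine ⟨c, hu0, ?_⟩
  calc ‖‖u‖⁻¹ • u - ‖π‖⁻¹ • π‖ = ‖‖u‖⁻¹ • u - ‖v‖⁻¹ • v‖ := by rw [hdir]
    _ ≤ 2 * ‖u - v‖ / ‖u‖ := normdir u v hu0 hv0
    _ ≤ 2 * (s/2) / ‖u‖ := by gcongr
    _ = s / ‖u‖ := by ring
    _ < s / (2*s/ε) := div_lt_div_of_pos_left hs0 (by positivity) hu_big
    _ = ε/2 := by field_simp
    _ < ε := by linarith

theorem part2 {n : ℕ} (K : Set (E n)) (hKcpt : IsCompact K)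
    (π : E n) (hπ : π ≠ 0) (π₀ : ℝ) (hval : ∀ x ∈ K, ⟪π, x⟫_ℝ ≤ π₀)
    (hsupp : ∃ x ∈ K, ⟪π, x⟫_ℝ = π₀)
    (U : Set (E n)) (hU : IsOpen U) (hFU : {x ∈ K | ⟪π, x⟫_ℝ = π₀} ⊆ U) :
    ∃ ε > (0 : ℝ), ∀ c : Fin n → ℤ, iv c ≠ 0 →
        ‖‖iv c‖⁻¹ • iv c - ‖π‖⁻¹ • π‖ < ε →
        ∀ x ∈ K, (∀ y ∈ K, ⟪iv c, y⟫_ℝ ≤ ⟪iv c, x⟫_ℝ) → x ∈ U := by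
  by_contra hcon
  push_neg at hcon
  have hseq : ∀ k : ℕ, ∃ c : Fin n → ℤ, iv c ≠ 0 ∧
      ‖‖iv c‖⁻¹ • iv c - ‖π‖⁻¹ • π‖ < 1 / ((k:ℝ) + 1) ∧
      ∃ x, x ∈ K ∧ (∀ y ∈ K, ⟪iv c, y⟫_ℝ ≤ ⟪iv c, x⟫_ℝ) ∧ x ∉ U := by
    intro k
    obtain ⟨c, hc0, hcd, x, hxK, hxmax, hxU⟩ := hcon (1 / ((k:ℝ)+1)) (by positivity)
    exact ⟨c, hc0, hcd, x, hxK, hxmax, hxU⟩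
  choose c hc0 hcd x hxK hxmax hxU using hseq
  have hKU : IsCompact (K \ U) := hKcpt.diff hU
  have hmem : ∀ k, x k ∈ K \ U := fun k => ⟨hxK k, hxU k⟩
  obtain ⟨x₀, hx₀, φ, hφ, hconv⟩ := hKU.tendsto_subseq hmem
  set d : ℕ → E n := fun k => ‖iv (c k)‖⁻¹ • iv (c k) with hd
  set p : E n := ‖π‖⁻¹ • π with hp
  have hdtend : Tendsto d atTop (𝓝 p) := by
    rw [tendsto_iff_norm_sub_tendsto_zero]
    exact squeeze_zero (fun k => norm_nonneg _) (fun k => le_of_lt (hcd k))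
      tendsto_one_div_add_atTop_nhds_zero_nat
  have hdφ : Tendsto (d ∘ φ) atTop (𝓝 p) := hdtend.comp hφ.tendsto_atTop
  have hπ0 : (0:ℝ) < ‖π‖ := norm_pos_iff.mpr hπ
  have key : ∀ y ∈ K, ⟪p, y⟫_ℝ ≤ ⟪p, x₀⟫_ℝ := by
    intro y hy
    have h1 : ∀ k, ⟪d (φ k), y⟫_ℝ ≤ ⟪d (φ k), x (φ k)⟫_ℝ := by
      intro k
      have h2 := hxmax (φ k) y hy
      have hpos : (0:ℝ) ≤ ‖iv (c (φ k))‖⁻¹ := by positivity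
      show ⟪‖iv (c (φ k))‖⁻¹ • iv (c (φ k)), y⟫_ℝ ≤ ⟪‖iv (c (φ k))‖⁻¹ • iv (c (φ k)), x (φ k)⟫_ℝ
      rw [real_inner_smul_left, real_inner_smul_left]
      exact mul_le_mul_of_nonneg_left h2 hpos
    have t1 : Tendsto (fun k => ⟪d (φ k), y⟫_ℝ) atTop (𝓝 ⟪p, y⟫_ℝ) :=
      hdφ.inner tendsto_const_nhds
    have t2 : Tendsto (fun k => ⟪d (φ k), x (φ k)⟫_ℝ) atTop (𝓝 ⟪p, x₀⟫_ℝ) :=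
      hdφ.inner hconv
    exact le_of_tendsto_of_tendsto' t1 t2 h1
  obtain ⟨x₁, hx₁K, hx₁⟩ := hsupp
  have h3 := key x₁ hx₁K
  rw [hp, real_inner_smul_left, real_inner_smul_left] at h3
  have h4 : ⟪π, x₁⟫_ℝ ≤ ⟪π, x₀⟫_ℝ := (mul_le_mul_iff_right₀ (inv_pos.mpr hπ0)).mp h3
  have h5 : ⟪π, x₀⟫_ℝ = π₀ := le_antisymm (hval x₀ hx₀.1) (hx₁ ▸ h4)
  exact hx₀.2 (hFU ⟨hx₀.1, h5⟩)

/-- **Approximating an irrational supporting direction by integer directions.** Let `K`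
be compact convex with supporting inequality `πx ≤ π₀`, where no nonzero integer vector
is parallel to `π`. Then integer vectors `c ≠ 0` exist with unit direction arbitrarily
close to that of `π`, and for every neighbourhood `U` of the `π`-face, every maximizer
over `K` of any such `c` with direction close enough to `π` lies in `U`. -/
theorem stmt18 {n : ℕ} (K : Set (E n)) (hKcpt : IsCompact K) (hKconv : Convex ℝ K)
    (π : E n) (hπ : π ≠ 0) (π₀ : ℝ) (hval : ∀ x ∈ K, ⟪π, x⟫_ℝ ≤ π₀)
    (hsupp : ∃ x ∈ K, ⟪π, x⟫_ℝ = π₀)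
    (hirr : ¬ ∃ c : Fin n → ℤ, iv c ≠ 0 ∧ ∃ t : ℝ, iv c = t • π) :
    (∀ ε > (0 : ℝ), ∃ c : Fin n → ℤ, iv c ≠ 0 ∧
        ‖‖iv c‖⁻¹ • iv c - ‖π‖⁻¹ • π‖ < ε) ∧
    ∀ U : Set (E n), IsOpen U → {x ∈ K | ⟪π, x⟫_ℝ = π₀} ⊆ U →
      ∃ ε > (0 : ℝ), ∀ c : Fin n → ℤ, iv c ≠ 0 →
        ‖‖iv c‖⁻¹ • iv c - ‖π‖⁻¹ • π‖ < ε →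
        ∀ x ∈ K, (∀ y ∈ K, ⟪iv c, y⟫_ℝ ≤ ⟪iv c, x⟫_ℝ) → x ∈ U := by
  exact ⟨fun ε hε => approx_s18 π hπ ε hε,
    fun U hU hFU => part2 K hKcpt π hπ π₀ hval hsupp U hU hFU⟩
end
end
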